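/- arXiv:1605.04969 — 5 statements merged into one kernel-verified Lean document; each statement's English description precedes it below -/
import Mathlib

section
/- For all n ≥ 1, the number of permutations of [n] avoiding both patterns 213 and 2341 equals the Fibonacci number F_{2n−1}, where F_0 = 0, F_1 = 1, and F_n = F_{n−1} + F_{n−2}. -/
/-- A word `π` contains the pattern `τ` if some subsequence of `π` is
order-isomorphic to `τ`. -/
def containsPat {n k : ℕ} (π : Fin n → Fin n) (τ : Fin k → Fin k) : Prop :=
  ∃ f : Fin k → Fin n, StrictMono f ∧ ∀ i j : Fin k, τ i < τ j ↔ π (f i) < π (f j)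

/-- `π` avoids the pattern `τ`. -/
def avoidsPat {n k : ℕ} (π : Fin n → Fin n) (τ : Fin k → Fin k) : Prop :=
  ¬ containsPat π τ

/-!
Every permutation of size `m + 1` arises in exactly one way by inserting the new largest value at
some position `p` into a permutation `σ` of size `m`. Since the new maximum can only play the `3`
of a `213` or the `4` of a `2341`, the result avoids both patterns exactly when `σ` does and each of
the first `p - 1` entries of `σ` is smaller than everything to its right, i.e. `σ` begins with
`0, 1, …, p - 2`. Let `c(m, k)` count the permutations in the class whose first `k` entries have
this property. Inserting the maximum gives `c(m + 1, k) = c(m, k) + ∑_{k ≤ j < m} c(m, j)`, and by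
induction `c(m, k) = F_{2(m-k)-1}` (with `F_{-1} = 1`); the theorem is the case `k = 0`.
-/

open Equiv

theorem avoidsPat_102_iff {n : ℕ} (π : Fin n → Fin n) :
    avoidsPat π ![1,0,2] ↔ ∀ a b c : Fin n, a < b → b < c → ¬(π b < π a ∧ π a < π c) := by
  constructor
  · rintro h a b c hab hbc ⟨hba, hac⟩
    refine h ⟨![a,b,c], ?_, ?_⟩
    · refine Fin.strictMono_iff_lt_succ.2 fun i ↦ ?_
      fin_cases i <;> simpa
    · intro i j
      fin_cases i <;> fin_cases j <;> simp <;> omega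
  · rintro h ⟨f, hf, hiso⟩
    exact h (f 0) (f 1) (f 2) (hf (by decide)) (hf (by decide))
      ⟨(hiso 1 0).1 (by decide), (hiso 0 2).1 (by decide)⟩

theorem avoidsPat_1230_iff {n : ℕ} (π : Fin n → Fin n) :
    avoidsPat π ![1,2,3,0] ↔ ∀ a b c d : Fin n, a < b → b < c → c < d →
      ¬(π d < π a ∧ π a < π b ∧ π b < π c) := by
  constructor
  · rintro h a b c d hab hbc hcd ⟨hda, hab', hbc'⟩
    refine h ⟨![a,b,c,d], ?_, ?_⟩
    · refine Fin.strictMono_iff_lt_succ.2 fun i ↦ ?_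
      fin_cases i <;> simpa
    · intro i j
      fin_cases i <;> fin_cases j <;> simp <;> omega
  · rintro h ⟨f, hf, hiso⟩
    exact h (f 0) (f 1) (f 2) (f 3) (hf (by decide)) (hf (by decide)) (hf (by decide))
      ⟨(hiso 3 0).1 (by decide), (hiso 0 1).1 (by decide), (hiso 1 2).1 (by decide)⟩

def Avoids213And2341 {m : ℕ} (σ : Perm (Fin m)) : Prop :=
  (∀ a b c : Fin m, a < b → b < c → ¬(σ b < σ a ∧ σ a < σ c)) ∧
  (∀ a b c d : Fin m, a < b → b < c → c < d → ¬(σ d < σ a ∧ σ a < σ b ∧ σ b < σ c))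

theorem Avoids213And2341.of_orderEmbedding {m n : ℕ} {σ : Perm (Fin m)} {π : Perm (Fin n)}
    (f : Fin m ↪o Fin n) (hf : ∀ i j, π (f i) < π (f j) ↔ σ i < σ j)
    (hπ : Avoids213And2341 π) : Avoids213And2341 σ := by
  refine ⟨fun a b c hab hbc h ↦ hπ.1 (f a) (f b) (f c) (by simpa) (by simpa) ?_,
    fun a b c d hab hbc hcd h ↦ hπ.2 (f a) (f b) (f c) (f d) (by simpa) (by simpa) (by simpa) ?_⟩
  · simpa only [hf] using h
  · simpa only [hf] using h

section InsertMax

variable {m : ℕ}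

def insertMax (p : Fin (m + 1)) (σ : Perm (Fin m)) : Perm (Fin (m + 1)) :=
  (finSuccEquiv' p).trans ((optionCongr σ).trans (finSuccEquiv' (Fin.last m)).symm)

@[simp]
theorem insertMax_self (p : Fin (m + 1)) (σ : Perm (Fin m)) : insertMax p σ p = Fin.last m := by
  simp [insertMax]

@[simp]
theorem insertMax_succAbove (p : Fin (m + 1)) (σ : Perm (Fin m)) (i : Fin m) :
    insertMax p σ (p.succAbove i) = (σ i).castSucc := by
  simp [insertMax, Fin.succAbove_last]

theorem insertMax_bijective :
    Function.Bijective (fun x : Fin (m + 1) × Perm (Fin m) ↦ insertMax x.1 x.2) := by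
  constructor
  · rintro ⟨p, σ⟩ ⟨q, τ⟩ h
    simp only at h
    have hpq : p = q := (insertMax p σ).injective (by rw [insertMax_self, h, insertMax_self])
    subst hpq
    refine Prod.ext rfl (Equiv.ext fun i ↦ Fin.castSucc_injective _ ?_)
    rw [← insertMax_succAbove, h, insertMax_succAbove]
  · intro π
    set p := π.symm (Fin.last m)
    set e : Perm (Option (Fin m)) :=
      (finSuccEquiv' p).symm.trans (π.trans (finSuccEquiv' (Fin.last m)))
    have he : e none = none := by simp [e, p]
    have hσ : optionCongr (removeNone e) = e := by
      ext1 x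
      cases x with
      | none => simp [he]
      | some x =>
        obtain ⟨y, hy⟩ := Option.ne_none_iff_exists'.1
          (fun h ↦ Option.some_ne_none x (e.injective (h.trans he.symm)))
        rw [optionCongr_apply, Option.map_some]
        exact removeNone_some e ⟨y, hy⟩
    refine ⟨(p, removeNone e), Equiv.ext fun x ↦ ?_⟩
    simp only [insertMax, hσ, e]
    simp

def PrefixRLMinima (σ : Perm (Fin m)) (k : ℕ) : Prop :=
  ∀ i j : Fin m, (i : ℕ) < k → i < j → σ i < σ j

theorem Avoids213And2341.of_insertMax {p : Fin (m + 1)} {σ : Perm (Fin m)}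
    (hπ : Avoids213And2341 (insertMax p σ)) :
    Avoids213And2341 σ ∧ PrefixRLMinima σ (p - 1) := by
  have hinc : ∀ i j : Fin m, i < j → (j : ℕ) < p → σ i < σ j := by
    intro i j hij hjp
    refine lt_of_not_ge fun hji ↦ hπ.1 (p.succAbove i) (p.succAbove j) p (by simpa)
      ((Fin.succAbove_lt_iff_castSucc_lt p j).2 hjp) ⟨?_, by simp⟩
    simpa using lt_of_le_of_ne hji (σ.injective.ne hij.ne')
  refine ⟨hπ.of_orderEmbedding p.succAboveOrderEmb (by simp), fun i j hi hij ↦ ?_⟩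
  have hip : (i : ℕ) + 1 < p := by omega
  set i' : Fin m := ⟨i + 1, by omega⟩
  have hii' : i < i' := Fin.lt_def.2 (Nat.lt_succ_self _)
  rcases lt_or_ge (j : ℕ) p with hjp | hpj
  · exact hinc i j hij hjp
  refine lt_of_not_ge fun hji ↦ hπ.2 (p.succAbove i) (p.succAbove i') p (p.succAbove j)
    (by simpa) ((Fin.succAbove_lt_iff_castSucc_lt p i').2 hip)
    ((Fin.lt_succAbove_iff_le_castSucc p j).2 hpj) ⟨?_, by simpa using hinc i i' hii' hip, by simp⟩
  simpa using lt_of_le_of_ne hji (σ.injective.ne hij.ne')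

theorem Avoids213And2341.insertMax_of_prefixRLMinima {p : Fin (m + 1)} {σ : Perm (Fin m)}
    (hσ : Avoids213And2341 σ) (hpre : PrefixRLMinima σ (p - 1)) :
    Avoids213And2341 (insertMax p σ) := by
  have hne : ∀ {x y}, insertMax p σ x < insertMax p σ y → x ≠ p := by
    rintro x y h rfl
    exact (Fin.le_last _).not_gt (by simpa using h)
  have hpre' : ∀ i j l : Fin m, i < j → p.succAbove j < p → i < l → σ i < σ l := by
    intro i j l hij hjp hil
    have hjp' := Fin.lt_def.1 ((Fin.succAbove_lt_iff_castSucc_lt p j).1 hjp)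
    exact hpre i l (by simp only [Fin.val_castSucc] at hjp'; omega) hil
  constructor
  · intro a b c hab hbc ⟨hba, hac⟩
    obtain ⟨i, rfl⟩ := Fin.exists_succAbove_eq (hne hac)
    obtain ⟨j, rfl⟩ := Fin.exists_succAbove_eq (hne (hba.trans hac))
    have hij := Fin.succAbove_lt_succAbove_iff.1 hab
    simp only [insertMax_succAbove, Fin.castSucc_lt_castSucc_iff] at hba
    rcases eq_or_ne c p with rfl | hc
    · exact (hpre' i j j hij hbc hij).not_gt hba
    obtain ⟨l, rfl⟩ := Fin.exists_succAbove_eq hc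
    simp only [insertMax_succAbove, Fin.castSucc_lt_castSucc_iff,
      Fin.succAbove_lt_succAbove_iff] at hac hbc
    exact hσ.1 i j l hij hbc ⟨hba, hac⟩
  · intro a b c d hab hbc hcd ⟨hda, hab', hbc'⟩
    obtain ⟨i, rfl⟩ := Fin.exists_succAbove_eq (hne hab')
    obtain ⟨j, rfl⟩ := Fin.exists_succAbove_eq (hne hbc')
    obtain ⟨l, rfl⟩ := Fin.exists_succAbove_eq (hne (hda.trans hab'))
    have hij := Fin.succAbove_lt_succAbove_iff.1 hab
    have hil := Fin.succAbove_lt_succAbove_iff.1 (hab.trans (hbc.trans hcd))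
    simp only [insertMax_succAbove, Fin.castSucc_lt_castSucc_iff] at hda hab'
    rcases eq_or_ne c p with rfl | hc
    · exact (hpre' i j l hij hbc hil).not_gt hda
    obtain ⟨k, rfl⟩ := Fin.exists_succAbove_eq hc
    simp only [insertMax_succAbove, Fin.castSucc_lt_castSucc_iff,
      Fin.succAbove_lt_succAbove_iff] at hbc' hbc hcd
    exact hσ.2 i j k l hij hbc hcd ⟨hda, hab', hbc'⟩

theorem avoids213And2341_insertMax_iff {p : Fin (m + 1)} {σ : Perm (Fin m)} :
    Avoids213And2341 (insertMax p σ) ↔ Avoids213And2341 σ ∧ PrefixRLMinima σ (p - 1) :=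
  ⟨Avoids213And2341.of_insertMax, fun h ↦ h.1.insertMax_of_prefixRLMinima h.2⟩

theorem prefixRLMinima_insertMax_iff {p : Fin (m + 1)} {σ : Perm (Fin m)} {k : ℕ} (hk : k ≤ m) :
    PrefixRLMinima (insertMax p σ) k ↔ k ≤ p ∧ PrefixRLMinima σ k := by
  constructor
  · intro h
    have hkp : k ≤ p := by
      by_contra! hpk
      have := h p ⟨p + 1, by omega⟩ hpk (Fin.lt_def.2 (Nat.lt_succ_self _))
      exact (Fin.le_last _).not_gt (by simpa using this)
    refine ⟨hkp, fun i j hi hij ↦ ?_⟩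
    have hip : i.castSucc < p := Fin.lt_def.2 (by simp; omega)
    simpa using h (p.succAbove i) (p.succAbove j) (by simpa [Fin.succAbove_of_castSucc_lt p i hip])
      (by simpa)
  · rintro ⟨hkp, h⟩ x y hx hxy
    have hxp : x < p := Fin.lt_def.2 (by omega)
    rw [← Fin.succAbove_castPred_of_lt p x hxp] at hxy ⊢
    rcases eq_or_ne y p with rfl | hy
    · simp [Fin.castSucc_lt_last]
    obtain ⟨j, rfl⟩ := Fin.exists_succAbove_eq hy
    simpa using h _ j (by simpa using hx) (Fin.succAbove_lt_succAbove_iff.1 hxy)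

theorem prefixRLMinima_zero (σ : Perm (Fin m)) : PrefixRLMinima σ 0 :=
  fun _ _ h ↦ absurd h (Nat.not_lt_zero _)

theorem prefixRLMinima_max_iff {σ : Perm (Fin m)} {a b : ℕ} :
    PrefixRLMinima σ (max a b) ↔ PrefixRLMinima σ a ∧ PrefixRLMinima σ b := by
  simp only [PrefixRLMinima, lt_max_iff, or_imp, forall_and]

theorem prefixRLMinima_add_one_iff (σ : Perm (Fin (m + 1))) :
    PrefixRLMinima σ (m + 1) ↔ PrefixRLMinima σ m :=
  forall₂_congr fun i j ↦ by
    refine ⟨fun h hi ↦ h (by omega), fun h _ hij ↦ h (by have := Fin.lt_def.1 hij; omega) hij⟩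

end InsertMax

open Finset

noncomputable def avoiderCount (m k : ℕ) : ℕ :=
  Nat.card {σ : Perm (Fin m) // Avoids213And2341 σ ∧ PrefixRLMinima σ k}

theorem card_avoiders_insertMax {m k : ℕ} (hk : k ≤ m) (p : Fin (m + 1)) :
    Nat.card {σ // Avoids213And2341 (insertMax p σ) ∧ PrefixRLMinima (insertMax p σ) k} =
      if k ≤ p then avoiderCount m (max k (p - 1)) else 0 := by
  simp only [avoids213And2341_insertMax_iff, prefixRLMinima_insertMax_iff hk]
  split_ifs with hkp
  · refine Nat.card_congr (Equiv.subtypeEquivRight fun σ ↦ ?_)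
    rw [prefixRLMinima_max_iff]
    tauto
  · simp [hkp]

theorem avoiderCount_add_one {m k : ℕ} (hk : k ≤ m) :
    avoiderCount (m + 1) k = avoiderCount m k + ∑ i ∈ range (m - k), avoiderCount m (k + i) := by
  let Q : Perm (Fin (m + 1)) → Prop := fun π ↦ Avoids213And2341 π ∧ PrefixRLMinima π k
  calc avoiderCount (m + 1) k
      = Nat.card {x : Fin (m + 1) × Perm (Fin m) // Q (insertMax x.1 x.2)} :=
        Nat.card_congr ((Equiv.ofBijective _ insertMax_bijective).subtypeEquiv
          fun _ ↦ Iff.rfl).symm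
    _ = ∑ p : Fin (m + 1), Nat.card {σ // Q (insertMax p σ)} := by
        rw [Nat.card_congr (subtypeProdEquivSigmaSubtype fun p σ ↦ Q (insertMax p σ)),
          Nat.card_sigma]
    _ = ∑ p ∈ range (m + 1), if k ≤ p then avoiderCount m (max k (p - 1)) else 0 := by
        simp only [Q, card_avoiders_insertMax hk]
        exact Fin.sum_univ_eq_sum_range
          (fun p ↦ if k ≤ p then avoiderCount m (max k (p - 1)) else 0) (m + 1)
    _ = ∑ p ∈ Ico k (m + 1), avoiderCount m (max k (p - 1)) := by
        rw [sum_ite, sum_const_zero, add_zero]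
        congr 1
        ext p
        simp only [mem_filter, mem_range, mem_Ico]
        omega
    _ = avoiderCount m k + ∑ i ∈ range (m - k), avoiderCount m (k + i) := by
        rw [sum_Ico_eq_sum_range, show m + 1 - k = m - k + 1 by omega, sum_range_succ', add_comm]
        congr 1
        · simp
        · exact sum_congr rfl fun i _ ↦ by congr 1; omega

/-- `oddFib n = F_{2n-1}`, with `F_{-1} = 1`. -/
def oddFib : ℕ → ℕ
  | 0 => 1
  | n + 1 => Nat.fib (2 * n + 1)

theorem sum_range_fib_two_mul_add_one (n : ℕ) :
    ∑ i ∈ range n, Nat.fib (2 * i + 1) = Nat.fib (2 * n) := by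
  induction n with
  | zero => simp
  | succ n ih => rw [sum_range_succ, ih, mul_add_one, Nat.fib_add_two]

theorem oddFib_add_one (n : ℕ) : oddFib (n + 1) = oddFib n + ∑ i ∈ range n, oddFib (n - i) := by
  have hsum : ∑ i ∈ range n, oddFib (n - i) = Nat.fib (2 * n) := by
    rw [← sum_range_fib_two_mul_add_one, ← sum_range_reflect]
    refine sum_congr rfl fun i hi ↦ ?_
    rw [show n - (n - 1 - i) = i + 1 by simp at hi; omega, oddFib]
  rw [hsum]
  cases n with
  | zero => rfl
  | succ n =>
    show Nat.fib (2 * n + 1 + 2) = Nat.fib (2 * n + 1) + Nat.fib (2 * n + 1 + 1)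
    exact Nat.fib_add_two

theorem avoiderCount_eq_oddFib {m k : ℕ} (hk : k ≤ m) : avoiderCount m k = oddFib (m - k) := by
  induction m generalizing k with
  | zero =>
    obtain rfl : k = 0 := by omega
    simp [avoiderCount, Avoids213And2341, PrefixRLMinima, oddFib]
  | succ m ih =>
    have hle : ∀ k ≤ m, avoiderCount (m + 1) k = oddFib (m + 1 - k) := by
      intro k hk
      rw [avoiderCount_add_one hk, ih hk, show m + 1 - k = m - k + 1 by omega, oddFib_add_one]
      refine congrArg _ (sum_congr rfl fun i hi ↦ ?_)
      rw [ih (by simp at hi; omega)]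
      congr 1
      omega
    rcases Nat.lt_or_ge m k with hmk | hkm
    · obtain rfl : k = m + 1 := by omega
      simp only [avoiderCount, prefixRLMinima_add_one_iff] at hle ⊢
      simpa [oddFib] using hle m le_rfl
    · exact hle k hkm

/-- The number of permutations of [n] avoiding 213 and 2341 (0-indexed: 102 and 1230)
equals the Fibonacci number F_{2n-1}. -/
theorem stmt1 (n : ℕ) (hn : 1 ≤ n) :
    Nat.card {π : Equiv.Perm (Fin n) //
      avoidsPat (⇑π) ![1,0,2] ∧ avoidsPat (⇑π) ![1,2,3,0]} = Nat.fib (2 * n - 1) := by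
  obtain ⟨m, rfl⟩ := Nat.exists_eq_add_of_le' hn
  calc _ = avoiderCount (m + 1) 0 := Nat.card_congr <| Equiv.subtypeEquivRight fun π ↦ by
          rw [avoidsPat_102_iff, avoidsPat_1230_iff]
          exact ⟨fun h ↦ ⟨h, prefixRLMinima_zero π⟩, And.left⟩
    _ = oddFib (m + 1) := avoiderCount_eq_oddFib (Nat.zero_le _)
    _ = Nat.fib (2 * (m + 1) - 1) := rfl
end

section
/- Let T = {2143, 2341, 3412} and suppose π ∈ S_n avoids T, the first letter of π is not 1, and π has at least 3 left-right maxima. Then the last letter of π is n. -/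
/-- Position `i` is a left-right maximum of `pi`. -/
def isLRMax {n : ℕ} (π : Fin n → Fin n) (i : Fin n) : Prop :=
  ∀ j, j < i → π j < π i

/-- The number of left-right maxima of `pi`. -/
noncomputable def lrMaxCount {n : ℕ} (π : Fin n → Fin n) : ℕ :=
  Nat.card {i : Fin n // isLRMax π i}

private lemma pat4 {n : ℕ} (π : Fin n → Fin n) (τ : Fin 4 → Fin 4)
    (i0 i1 i2 i3 : Fin n) (h01 : i0 < i1) (h12 : i1 < i2) (h23 : i2 < i3)
    (h : ∀ a b : Fin 4, τ a < τ b ↔ π (![i0,i1,i2,i3] a) < π (![i0,i1,i2,i3] b)) :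
    containsPat π τ := by
  refine ⟨![i0,i1,i2,i3], ?_, h⟩
  intro a b hab
  fin_cases a <;> fin_cases b <;>
    first
      | exact absurd hab (by decide)
      | exact h01 | exact h12 | exact h23
      | exact h01.trans h12 | exact h12.trans h23 | exact (h01.trans h12).trans h23

/-- If π avoids {2143, 2341, 3412} (0-indexed: 1032, 1230, 2301), its first letter is
not 1, and it has at least 3 left-right maxima, then its last letter is n. -/
theorem stmt5 (n : ℕ) (hn : 0 < n) (π : Equiv.Perm (Fin n))
    (h1 : avoidsPat (⇑π) ![1,0,3,2]) (h2 : avoidsPat (⇑π) ![1,2,3,0])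
    (h3 : avoidsPat (⇑π) ![2,3,0,1])
    (hfirst : (π ⟨0, hn⟩ : ℕ) ≠ 0)
    (hm : 3 ≤ lrMaxCount (⇑π)) :
    (π ⟨n - 1, by omega⟩ : ℕ) = n - 1 := by
  classical
  have hn2 : 2 ≤ n := by
    have := (π ⟨0, hn⟩).isLt
    omega
  set z : Fin n := ⟨0, hn⟩ with hz
  set q : Fin n := ⟨n - 1, by omega⟩ with hqdef
  by_contra hq
  -- the position of the maximal value n-1
  set M : Fin n := π.symm ⟨n - 1, by omega⟩ with hMdef
  have hπM : (π M : ℕ) = n - 1 := by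
    rw [hMdef, Equiv.apply_symm_apply]
  -- the position of the value 0
  set p : Fin n := π.symm ⟨0, hn⟩ with hpdef
  have hπp : (π p : ℕ) = 0 := by
    rw [hpdef, Equiv.apply_symm_apply]
  have hlt : ∀ i : Fin n, (π i : ℕ) ≤ n - 1 := fun i => by
    have := (π i).isLt; omega
  have hinj : ∀ i j : Fin n, i ≠ j → (π i : ℕ) ≠ (π j : ℕ) := by
    intro i j hij h
    exact hij (π.injective (Fin.ext h))
  -- M < q
  have hMq : M < q := by
    have hne : M ≠ q := by
      intro h
      exact hq (by rw [← h]; exact hπM)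
    have h1 : (M : ℕ) < n := M.isLt
    have h2 : (M : ℕ) ≠ n - 1 := fun h => hne (Fin.ext h)
    exact Fin.lt_def.mpr (by simp only [hqdef]; omega)
  -- every LR max is ≤ M
  have hLRle : ∀ i, isLRMax (⇑π) i → i ≤ M := by
    intro i hi
    by_contra h
    push_neg at h
    have h2 := Fin.lt_def.mp (hi M h)
    have := hlt i
    omega
  -- extract two LR maxima a < b, both < M
  have hcard : 2 < (Finset.univ.filter (fun i => isLRMax (⇑π) i)).card := by
    have heq : lrMaxCount (⇑π) = (Finset.univ.filter (fun i => isLRMax (⇑π) i)).card := by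
      rw [lrMaxCount, Nat.card_eq_fintype_card, Fintype.card_subtype]
    omega
  have h2card : 1 < ((Finset.univ.filter (fun i => isLRMax (⇑π) i)).erase M).card := by
    have := Finset.pred_card_le_card_erase
      (s := Finset.univ.filter (fun i => isLRMax (⇑π) i)) (a := M)
    omega
  obtain ⟨a, ha, b, hb, hab⟩ := Finset.one_lt_card.mp h2card
  have haM : a < M := lt_of_le_of_ne (hLRle a (Finset.mem_filter.mp (Finset.mem_of_mem_erase ha)).2)
    (Finset.ne_of_mem_erase ha)
  have hbM : b < M := lt_of_le_of_ne (hLRle b (Finset.mem_filter.mp (Finset.mem_of_mem_erase hb)).2)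
    (Finset.ne_of_mem_erase hb)
  have haLR : isLRMax (⇑π) a := (Finset.mem_filter.mp (Finset.mem_of_mem_erase ha)).2
  have hbLR : isLRMax (⇑π) b := (Finset.mem_filter.mp (Finset.mem_of_mem_erase hb)).2
  -- key argument, for a < b both LR maxima below M
  have key : ∀ a b : Fin n, a < b → b < M → isLRMax (⇑π) a → isLRMax (⇑π) b → False := by
    intro a b hab hbM haLR hbLR
    -- value facts
    have hva : 0 < (π a : ℕ) := by
      rcases eq_or_ne a z with h | h
      · rw [h]; omega
      · have hza : z < a := by
          refine Fin.lt_def.mpr ?_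
          have : (a : ℕ) ≠ 0 := fun h0 => h (Fin.ext (by simp [hz, h0]))
          simp only [hz]; omega
        have := Fin.lt_def.mp (haLR z hza)
        omega
    have hvab : (π a : ℕ) < (π b : ℕ) := Fin.lt_def.mp (hbLR a hab)
    have hvbM : (π b : ℕ) < n - 1 := by
      have h1 := hlt b
      have h2 := hinj b M (ne_of_lt hbM)
      omega
    -- no small value after M
    have step : ∀ l : Fin n, M < l → (π l : ℕ) < (π a : ℕ) → False := by
      intro l hMl hval
      refine h2 (pat4 (⇑π) ![1,2,3,0] a b M l hab hbM hMl ?_)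
      simp only [Fin.forall_fin_succ, Fin.forall_fin_zero_pi, IsEmpty.forall_iff,
        Matrix.cons_val_zero, Matrix.cons_val_succ, Fin.lt_def, and_true] <;>
      norm_num <;> omega
    -- p < M
    have hpM : p < M := by
      have hpz : p ≠ z := by
        intro h
        rw [h] at hπp
        exact hfirst hπp
      have hpM' : p ≠ M := by
        intro h
        rw [h, hπM] at hπp
        omega
      by_contra h
      push_neg at h
      exact step p (lt_of_le_of_ne h (Ne.symm hpM')) (by omega)
    -- π q < π z
    have hqz : (π q : ℕ) < (π z : ℕ) := by
      have hqz' : q ≠ z := by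
        intro h
        have : (q : ℕ) = (z : ℕ) := by rw [h]
        simp only [hqdef, hz] at this
        omega
      have hne := hinj q z hqz'
      by_contra h
      push_neg at h
      have hzq : (π z : ℕ) < (π q : ℕ) := by omega
      have hzp : z < p := by
        refine Fin.lt_def.mpr ?_
        have : (p : ℕ) ≠ 0 := by
          intro h0
          have : p = z := Fin.ext (by simp [hz, h0])
          rw [this] at hπp
          exact hfirst hπp
        simp only [hz]; omega
      have hq' : (π q : ℕ) < n - 1 := by
        have := hlt q
        omega
      refine h1 (pat4 (⇑π) ![1,0,3,2] z p M q hzp hpM hMq ?_)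
      have hz0 : 0 < (π z : ℕ) := by omega
      simp only [Fin.forall_fin_succ, Fin.forall_fin_zero_pi, IsEmpty.forall_iff,
        Matrix.cons_val_zero, Matrix.cons_val_succ, Fin.lt_def, and_true] <;>
      norm_num <;> omega
    -- π q < π a
    have hqa : (π q : ℕ) < (π a : ℕ) := by
      rcases eq_or_ne a z with h | h
      · rw [h]; omega
      · have hza : z < a := by
          refine Fin.lt_def.mpr ?_
          have : (a : ℕ) ≠ 0 := fun h0 => h (Fin.ext (by simp [hz, h0]))
          simp only [hz]; omega
        have := Fin.lt_def.mp (haLR z hza)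
        omega
    exact step q hMq hqa
  rcases hab.lt_or_gt with h | h
  · exact key a b h hbM haLR hbLR
  · exact key b a h haM hbLR haLR
end

section
/- Let T = {2143, 2341, 3412}. If π ∈ S_n avoids T, the first letter of π is not 1, and the last letter of π is not n, then π has at most two left-right maxima. -/
set_option maxRecDepth 10000 in
lemma contains1032 {n : ℕ} (π : Fin n → Fin n) (x0 x1 x2 x3 : Fin n)
    (h01 : (x0:ℕ) < x1) (h12 : (x1:ℕ) < x2) (h23 : (x2:ℕ) < x3)
    (v10 : (π x1 : ℕ) < π x0) (v03 : (π x0 : ℕ) < π x3) (v32 : (π x3 : ℕ) < π x2) :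
    containsPat π ![1,0,3,2] := by
  have e0 : ![x0,x1,x2,x3] (⟨0, by omega⟩ : Fin 4) = x0 := rfl
  have e1 : ![x0,x1,x2,x3] (⟨1, by omega⟩ : Fin 4) = x1 := rfl
  have e2 : ![x0,x1,x2,x3] (⟨2, by omega⟩ : Fin 4) = x2 := rfl
  have e3 : ![x0,x1,x2,x3] (⟨3, by omega⟩ : Fin 4) = x3 := rfl
  refine ⟨![x0,x1,x2,x3], ?_, ?_⟩
  · intro i j hij
    fin_cases i <;> fin_cases j <;>
      simp_all only [e0, e1, e2, e3, Fin.lt_def, Fin.mk_lt_mk] <;> omega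
  · intro i j
    fin_cases i <;> fin_cases j <;>
      simp only [e0, e1, e2, e3] <;>
      first
        | exact iff_of_true (by decide) (by rw [Fin.lt_def]; omega)
        | exact iff_of_false (by decide) (by rw [Fin.lt_def]; omega)

set_option maxRecDepth 10000 in
lemma contains1230 {n : ℕ} (π : Fin n → Fin n) (x0 x1 x2 x3 : Fin n)
    (h01 : (x0:ℕ) < x1) (h12 : (x1:ℕ) < x2) (h23 : (x2:ℕ) < x3)
    (v30 : (π x3 : ℕ) < π x0) (v01 : (π x0 : ℕ) < π x1) (v12 : (π x1 : ℕ) < π x2) :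
    containsPat π ![1,2,3,0] := by
  have e0 : ![x0,x1,x2,x3] (⟨0, by omega⟩ : Fin 4) = x0 := rfl
  have e1 : ![x0,x1,x2,x3] (⟨1, by omega⟩ : Fin 4) = x1 := rfl
  have e2 : ![x0,x1,x2,x3] (⟨2, by omega⟩ : Fin 4) = x2 := rfl
  have e3 : ![x0,x1,x2,x3] (⟨3, by omega⟩ : Fin 4) = x3 := rfl
  refine ⟨![x0,x1,x2,x3], ?_, ?_⟩
  · intro i j hij
    fin_cases i <;> fin_cases j <;>
      simp_all only [e0, e1, e2, e3, Fin.lt_def, Fin.mk_lt_mk] <;> omega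
  · intro i j
    fin_cases i <;> fin_cases j <;>
      simp only [e0, e1, e2, e3] <;>
      first
        | exact iff_of_true (by decide) (by rw [Fin.lt_def]; omega)
        | exact iff_of_false (by decide) (by rw [Fin.lt_def]; omega)

/-- If π avoids {2143, 2341, 3412}, its first letter is not 1, and its last letter
is not n, then π has at most two left-right maxima. -/
theorem stmt6 (n : ℕ) (hn : 0 < n) (π : Equiv.Perm (Fin n))
    (h1 : avoidsPat (⇑π) ![1,0,3,2]) (h2 : avoidsPat (⇑π) ![1,2,3,0])
    (h3 : avoidsPat (⇑π) ![2,3,0,1])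
    (hfirst : (π ⟨0, hn⟩ : ℕ) ≠ 0)
    (hlast : (π ⟨n - 1, by omega⟩ : ℕ) ≠ n - 1) :
    lrMaxCount (⇑π) ≤ 2 := by
  classical
  by_contra h
  push_neg at h
  have hn2 : 2 ≤ n := by
    rcases Nat.lt_or_ge n 2 with h2' | h2'
    · have := (π ⟨0, hn⟩).isLt; omega
    · exact h2'
  set a : Fin n := ⟨0, hn⟩ with ha
  set top : Fin n := ⟨n-1, by omega⟩ with htop
  set c : Fin n := π.symm top with hc
  have hπc : π c = top := π.apply_symm_apply top
  have htopval : (top : ℕ) = n - 1 := rfl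
  have haval : (a : ℕ) = 0 := rfl
  have hcmax : ∀ j : Fin n, j ≠ c → (π j : ℕ) < n - 1 := by
    intro j hj
    have h1' : π j ≠ top := by
      intro hh
      exact hj (by rw [← π.symm_apply_apply j, hh])
    have h2' := (π j).isLt
    have h3' : (π j : ℕ) ≠ n - 1 := by
      intro hv
      exact h1' (Fin.ext (by rw [htopval, hv]))
    omega
  have hcval : (π c : ℕ) = n - 1 := by rw [hπc]
  have hclt : (c : ℕ) < n - 1 := by
    have hne : (c : ℕ) ≠ n - 1 := by
      intro hv
      apply hlast
      have hct : c = top := Fin.ext (by rw [htopval, hv])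
      rw [← hct]
      exact hcval
    have := c.isLt
    omega
  have htc : top ≠ c := by
    intro hh
    have : (top : ℕ) = (c : ℕ) := by rw [hh]
    omega
  have htv : (π top : ℕ) < n - 1 := hcmax top htc
  set p : Fin n := π.symm ⟨0, hn⟩ with hp
  have hπp : π p = ⟨0, hn⟩ := π.apply_symm_apply _
  have hpval : (π p : ℕ) = 0 := by rw [hπp]
  have hp0 : 0 < (p : ℕ) := by
    rcases Nat.eq_zero_or_pos (p : ℕ) with h0 | h0
    · exfalso
      have hpa : p = a := Fin.ext h0
      rw [hpa] at hpval
      exact hfirst hpval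
    · exact h0
  have hLRle : ∀ j, isLRMax (⇑π) j → (j : ℕ) ≤ (c : ℕ) := by
    intro j hj
    by_contra hlt
    push_neg at hlt
    have hcj : c < j := Fin.lt_def.mpr hlt
    have h1' := hj c hcj
    have h2' := hcmax j (by intro hh; rw [hh] at hcj; exact lt_irrefl _ hcj)
    rw [Fin.lt_def, hcval] at h1'
    omega
  have h0LR : isLRMax (⇑π) a := by
    intro j hj
    exfalso
    have := Fin.lt_def.mp hj
    omega
  have hcLR : isLRMax (⇑π) c := by
    intro j hj
    have := hcmax j (ne_of_lt hj)
    rw [Fin.lt_def, hcval]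
    omega
  set S : Finset (Fin n) := Finset.univ.filter (fun i : Fin n => isLRMax (⇑π) i) with hS
  have hcard : 3 ≤ S.card := by
    have heq : lrMaxCount (⇑π) = S.card := by
      rw [lrMaxCount, Nat.card_eq_fintype_card, Fintype.card_subtype]
    omega
  have h0S : a ∈ S := by simp [hS, h0LR]
  have hcS : c ∈ S := by simp [hS, hcLR]
  have hc0 : c ≠ a := by
    intro hh
    have hceq : (c : ℕ) = 0 := by rw [hh]
    have hsub : S ⊆ {a} := by
      intro j hj
      have hjLR : isLRMax (⇑π) j := by simpa [hS] using hj
      have hjle := hLRle j hjLR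
      have : (j : ℕ) = 0 := by omega
      simp only [Finset.mem_singleton]
      exact Fin.ext (by rw [this, haval])
    have := Finset.card_le_card hsub
    simp only [Finset.card_singleton] at this
    omega
  have hcard2 : 1 ≤ ((S.erase a).erase c).card := by
    rw [Finset.card_erase_of_mem (Finset.mem_erase.mpr ⟨hc0, hcS⟩),
        Finset.card_erase_of_mem h0S]
    omega
  obtain ⟨m, hm⟩ := Finset.card_pos.mp hcard2
  rw [Finset.mem_erase, Finset.mem_erase] at hm
  obtain ⟨hmc, hma, hmS⟩ := hm
  have hmLR : isLRMax (⇑π) m := by simpa [hS] using hmS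
  have hm0 : 0 < (m : ℕ) := by
    rcases Nat.eq_zero_or_pos (m : ℕ) with h0 | h0
    · exact absurd (Fin.ext h0 : m = a) hma
    · exact h0
  have hmc' : (m : ℕ) < (c : ℕ) := lt_of_le_of_ne (hLRle m hmLR) (fun hh => hmc (Fin.ext hh))
  have hA : 0 < (π a : ℕ) := Nat.pos_of_ne_zero hfirst
  have hAB : (π a : ℕ) < (π m : ℕ) := by
    have := hmLR a (Fin.lt_def.mpr (by omega))
    exact Fin.lt_def.mp this
  have hBc : (π m : ℕ) < n - 1 := hcmax m hmc
  have hvA : (π top : ℕ) ≠ (π a : ℕ) := by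
    intro hh
    have hta : top = a := π.injective (Fin.ext hh)
    have : (top : ℕ) = (a : ℕ) := by rw [hta]
    omega
  rcases lt_trichotomy (p : ℕ) (c : ℕ) with hpc | hpc | hpc
  · rcases lt_or_gt_of_ne hvA with hv | hv
    · -- π top < π a : pattern 1230 at (a, m, c, top)
      exact h2 (contains1230 (⇑π) a m c top (by omega) (by omega) (by omega)
        (by omega) (by omega) (by omega))
    · -- π top > π a : pattern 1032 at (a, p, c, top)
      exact h1 (contains1032 (⇑π) a p c top (by omega) (by omega) (by omega)
        (by omega) (by omega) (by omega))
  · exfalso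
    have hpc' : p = c := Fin.ext hpc
    rw [hpc'] at hpval
    omega
  · -- p > c : pattern 1230 at (a, m, c, p)
    exact h2 (contains1230 (⇑π) a m c p (by omega) (by omega) (by omega)
      (by omega) (by omega) (by omega))
end

section
/- For every n ≥ 0, the number of permutations of [n] avoiding {2143, 2341, 3412} equals the number of permutations of [n] avoiding {2143, 2341, 3421}; indeed there is an explicit bijection between the two avoidance classes preserving the number and positions of left-right maxima. -/
/-!
Call `(i, j)` a D-pair of `π` if `i < j`, `π i < π j` and at least two entries after `j` are
smaller than `π i`. A permutation without D-pairs avoids both 3412 and 3421 and is left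
alone. Otherwise let `(I, J)` be its lexicographically least D-pair and `S` the set of positions
after `J` holding values below `π I`, and reverse the entries of `π` on `S`. Since these are
exactly the values below `π I` after `J`, the reversal keeps `(I, J)` and `S`, so the map is an
involution, and it keeps the left-right maxima (no position of `S` is one, because of `I`).
In the presence of the D-pair `(I, J)`, avoiding 3412 (resp. 3421) makes `π` decreasing
(resp. increasing) on `S`, which the reversal exchanges. A case analysis on which entries of a
hypothetical occurrence lie in `S`, using the minimality of `(I, J)` and the avoidance of 2143
and 2341, shows that the image avoids 2143, 2341 and the other one of 3412, 3421.
-/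

section Patterns

variable {n : ℕ}

lemma containsPat_iff_of_injective {k : ℕ} {π : Fin n → Fin n} {τ : Fin k → Fin k}
    (hτ : Function.Injective τ) :
    containsPat π τ ↔
      ∃ f : Fin k → Fin n, StrictMono f ∧ ∀ i j, τ i < τ j → π (f i) < π (f j) := by
  refine ⟨fun ⟨f, hf, h⟩ => ⟨f, hf, fun i j => (h i j).1⟩,
    fun ⟨f, hf, h⟩ => ⟨f, hf, fun i j => ⟨h i j, fun hlt => ?_⟩⟩⟩
  rcases lt_trichotomy (τ i) (τ j) with hij | hij | hij
  · exact hij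
  · exact absurd hlt (by rw [hτ hij]; exact lt_irrefl _)
  · exact absurd hlt (h j i hij).not_gt

lemma strictMono_vec4 {a b c d : Fin n} (hab : a < b) (hbc : b < c) (hcd : c < d) :
    StrictMono ![a, b, c, d] := by
  rw [Fin.strictMono_iff_lt_succ]
  intro t
  fin_cases t <;> simpa

def Avoids2143 (w : Fin n → Fin n) : Prop :=
  ∀ ⦃a b c d : Fin n⦄, a < b → b < c → c < d → w b < w a → w a < w d → w d < w c → False

def Avoids2341 (w : Fin n → Fin n) : Prop :=
  ∀ ⦃a b c d : Fin n⦄, a < b → b < c → c < d → w a < w b → w b < w c → w d < w a → False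

def Avoids3412 (w : Fin n → Fin n) : Prop :=
  ∀ ⦃a b c d : Fin n⦄, a < b → b < c → c < d → w c < w d → w d < w a → w a < w b → False

def Avoids3421 (w : Fin n → Fin n) : Prop :=
  ∀ ⦃a b c d : Fin n⦄, a < b → b < c → c < d → w d < w c → w c < w a → w a < w b → False

variable {w : Fin n → Fin n}

lemma avoidsPat_iff_avoids2143 : avoidsPat w ![1, 0, 3, 2] ↔ Avoids2143 w := by
  rw [avoidsPat, containsPat_iff_of_injective (by decide)]
  refine ⟨fun h a b c d hab hbc hcd h₁ h₂ h₃ => h ⟨_, strictMono_vec4 hab hbc hcd, ?_⟩,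
    fun h ⟨f, hf, hτ⟩ => h (hf (by decide)) (hf (by decide)) (hf (by decide))
      (hτ 1 0 (by decide)) (hτ 0 3 (by decide)) (hτ 3 2 (by decide))⟩
  intro s t
  fin_cases s <;> fin_cases t <;>
    simp only [Fin.isValue, Fin.mk_one, Fin.zero_eta, Fin.reduceFinMk, Matrix.cons_val,
      Matrix.cons_val_zero, Matrix.cons_val_one, Fin.reduceLT, Fin.lt_one_iff, Fin.reduceEq,
      lt_self_iff_false, not_lt_zero, IsEmpty.forall_iff, forall_const] <;> order

lemma avoidsPat_iff_avoids2341 : avoidsPat w ![1, 2, 3, 0] ↔ Avoids2341 w := by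
  rw [avoidsPat, containsPat_iff_of_injective (by decide)]
  refine ⟨fun h a b c d hab hbc hcd h₁ h₂ h₃ => h ⟨_, strictMono_vec4 hab hbc hcd, ?_⟩,
    fun h ⟨f, hf, hτ⟩ => h (hf (by decide)) (hf (by decide)) (hf (by decide))
      (hτ 0 1 (by decide)) (hτ 1 2 (by decide)) (hτ 3 0 (by decide))⟩
  intro s t
  fin_cases s <;> fin_cases t <;>
    simp only [Fin.isValue, Fin.mk_one, Fin.zero_eta, Fin.reduceFinMk, Matrix.cons_val,
      Matrix.cons_val_zero, Matrix.cons_val_one, Fin.reduceLT, Fin.lt_one_iff, Fin.reduceEq,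
      lt_self_iff_false, not_lt_zero, IsEmpty.forall_iff, forall_const] <;> order

lemma avoidsPat_iff_avoids3412 : avoidsPat w ![2, 3, 0, 1] ↔ Avoids3412 w := by
  rw [avoidsPat, containsPat_iff_of_injective (by decide)]
  refine ⟨fun h a b c d hab hbc hcd h₁ h₂ h₃ => h ⟨_, strictMono_vec4 hab hbc hcd, ?_⟩,
    fun h ⟨f, hf, hτ⟩ => h (hf (by decide)) (hf (by decide)) (hf (by decide))
      (hτ 2 3 (by decide)) (hτ 3 0 (by decide)) (hτ 0 1 (by decide))⟩
  intro s t
  fin_cases s <;> fin_cases t <;>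
    simp only [Fin.isValue, Fin.mk_one, Fin.zero_eta, Fin.reduceFinMk, Matrix.cons_val,
      Matrix.cons_val_zero, Matrix.cons_val_one, Fin.reduceLT, Fin.lt_one_iff, Fin.reduceEq,
      lt_self_iff_false, not_lt_zero, IsEmpty.forall_iff, forall_const] <;> order

lemma avoidsPat_iff_avoids3421 : avoidsPat w ![2, 3, 1, 0] ↔ Avoids3421 w := by
  rw [avoidsPat, containsPat_iff_of_injective (by decide)]
  refine ⟨fun h a b c d hab hbc hcd h₁ h₂ h₃ => h ⟨_, strictMono_vec4 hab hbc hcd, ?_⟩,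
    fun h ⟨f, hf, hτ⟩ => h (hf (by decide)) (hf (by decide)) (hf (by decide))
      (hτ 3 2 (by decide)) (hτ 2 0 (by decide)) (hτ 0 1 (by decide))⟩
  intro s t
  fin_cases s <;> fin_cases t <;>
    simp only [Fin.isValue, Fin.mk_one, Fin.zero_eta, Fin.reduceFinMk, Matrix.cons_val,
      Matrix.cons_val_zero, Matrix.cons_val_one, Fin.reduceLT, Fin.lt_one_iff, Fin.reduceEq,
      lt_self_iff_false, not_lt_zero, IsEmpty.forall_iff, forall_const] <;> order

end Patterns

section ReverseOn

variable {α : Type*} [LinearOrder α]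

noncomputable def Finset.reverseOn (T : Finset α) : Equiv.Perm α :=
  Equiv.Perm.ofSubtype
    ((T.orderIsoOfFin rfl).symm.toEquiv.trans (Fin.revPerm.trans (T.orderIsoOfFin rfl).toEquiv))

namespace Finset

variable {T : Finset α} {x y : α}

lemma reverseOn_mem (hx : x ∈ T) : T.reverseOn x ∈ T := by
  rw [reverseOn, Equiv.Perm.ofSubtype_apply_of_mem _ hx]
  exact Subtype.prop _

lemma reverseOn_of_notMem (hx : x ∉ T) : T.reverseOn x = x :=
  Equiv.Perm.ofSubtype_apply_of_not_mem _ hx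

lemma reverseOn_reverseOn (x : α) : T.reverseOn (T.reverseOn x) = x := by
  by_cases hx : x ∈ T
  · rw [reverseOn, Equiv.Perm.ofSubtype_apply_of_mem _ hx, Equiv.Perm.ofSubtype_apply_coe]
    simp
  · rw [reverseOn_of_notMem hx, reverseOn_of_notMem hx]

lemma reverseOn_lt_reverseOn (hx : x ∈ T) (hy : y ∈ T) (hxy : x < y) :
    T.reverseOn y < T.reverseOn x := by
  rw [reverseOn, Equiv.Perm.ofSubtype_apply_of_mem _ hx, Equiv.Perm.ofSubtype_apply_of_mem _ hy]
  simpa using hxy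

end Finset

end ReverseOn

section DPairs

variable {n : ℕ}

def IsDPair (w : Fin n → Fin n) (i j : Fin n) : Prop :=
  i < j ∧ w i < w j ∧ ∃ k l, j < k ∧ j < l ∧ k ≠ l ∧ w k < w i ∧ w l < w i

structure IsMinDPair (w : Fin n → Fin n) (i j : Fin n) : Prop where
  isDPair : IsDPair w i j
  fst_le : ∀ ⦃i' j'⦄, IsDPair w i' j' → i ≤ i'
  snd_le : ∀ ⦃j'⦄, IsDPair w i j' → j ≤ j'

variable {w : Fin n → Fin n}

lemma exists_isMinDPair (h : ∃ i j, IsDPair w i j) : ∃ i j, IsMinDPair w i j := by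
  obtain ⟨i, ⟨j₀, hj₀⟩, hi⟩ := wellFounded_lt.has_min {i | ∃ j, IsDPair w i j} h
  obtain ⟨j, hj, hjmin⟩ := wellFounded_lt.has_min {j | IsDPair w i j} ⟨j₀, hj₀⟩
  exact ⟨i, j, hj, fun i' j' h' => not_lt.1 (hi i' ⟨j', h'⟩), fun j' h' => not_lt.1 (hjmin j' h')⟩

lemma IsMinDPair.unique {i j i' j' : Fin n} (h : IsMinDPair w i j) (h' : IsMinDPair w i' j') :
    i = i' ∧ j = j' := by
  obtain rfl : i = i' := le_antisymm (h.fst_le h'.isDPair) (h'.fst_le h.isDPair)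
  exact ⟨rfl, le_antisymm (h.snd_le h'.isDPair) (h'.snd_le h.isDPair)⟩

end DPairs

@[ext]
structure MinDPair (n : ℕ) where
  w : Fin n → Fin n
  inj : Function.Injective w
  I : Fin n
  J : Fin n
  isMin : IsMinDPair w I J

namespace MinDPair

variable {n : ℕ} {C : MinDPair n} {a b d i j k s t x y z x₁ x₂ : Fin n}

def S (C : MinDPair n) : Finset (Fin n) := {k | C.J < k ∧ C.w k < C.w C.I}

noncomputable def r (C : MinDPair n) : Equiv.Perm (Fin n) := C.S.reverseOn

noncomputable def q (C : MinDPair n) (x : Fin n) : Fin n := C.w (C.r x)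

lemma mem_S : k ∈ C.S ↔ C.J < k ∧ C.w k < C.w C.I := by simp [S]

lemma I_lt_J : C.I < C.J := C.isMin.isDPair.1

lemma wI_lt_wJ : C.w C.I < C.w C.J := C.isMin.isDPair.2.1

lemma J_lt_of_mem_S (hk : k ∈ C.S) : C.J < k := (mem_S.1 hk).1

lemma w_lt_of_mem_S (hk : k ∈ C.S) : C.w k < C.w C.I := (mem_S.1 hk).2

lemma I_lt_of_mem_S (hk : k ∈ C.S) : C.I < k := C.I_lt_J.trans (J_lt_of_mem_S hk)

lemma exists_pair_mem_S : ∃ k l, k ∈ C.S ∧ l ∈ C.S ∧ k ≠ l := by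
  obtain ⟨-, -, k, l, hk, hl, hkl, hwk, hwl⟩ := C.isMin.isDPair
  exact ⟨k, l, mem_S.2 ⟨hk, hwk⟩, mem_S.2 ⟨hl, hwl⟩, hkl⟩

lemma exists_mem_S : ∃ k, k ∈ C.S :=
  let ⟨k, _, hk, _⟩ := C.exists_pair_mem_S; ⟨k, hk⟩

lemma notMem_S_of_le_J (hk : k ≤ C.J) : k ∉ C.S := fun h => (J_lt_of_mem_S h).not_ge hk

lemma wI_lt_of_notMem_S (hJk : C.J < k) (hk : k ∉ C.S) : C.w C.I < C.w k := by
  refine lt_of_le_of_ne (not_lt.1 fun h => hk (mem_S.2 ⟨hJk, h⟩)) fun h => ?_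
  have := C.inj h
  have := C.I_lt_J
  order

lemma lt_J_of_notMem_S (hwk : C.w k < C.w C.I) (hk : k ∉ C.S) : k < C.J := by
  by_contra! hJk
  rcases hJk.lt_or_eq with hJk | rfl
  · exact (C.wI_lt_of_notMem_S hJk hk).not_gt hwk
  · exact C.wI_lt_wJ.not_gt hwk

lemma r_mem (hx : x ∈ C.S) : C.r x ∈ C.S := Finset.reverseOn_mem hx

lemma r_of_notMem (hx : x ∉ C.S) : C.r x = x := Finset.reverseOn_of_notMem hx

lemma r_r (x : Fin n) : C.r (C.r x) = x := Finset.reverseOn_reverseOn x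

lemma r_lt_r (hx : x ∈ C.S) (hy : y ∈ C.S) (hxy : x < y) : C.r y < C.r x :=
  Finset.reverseOn_lt_reverseOn hx hy hxy

lemma q_of_notMem (hx : x ∉ C.S) : C.q x = C.w x := by rw [q, r_of_notMem hx]

lemma q_r (x : Fin n) : C.q (C.r x) = C.w x := by rw [q, r_r]

lemma q_lt_of_mem_S (hx : x ∈ C.S) : C.q x < C.w C.I := w_lt_of_mem_S (r_mem hx)

lemma q_injective : Function.Injective C.q := fun _ _ h => C.r.injective (C.inj h)

lemma q_of_le_J (hx : x ≤ C.J) : C.q x = C.w x := q_of_notMem (notMem_S_of_le_J hx)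

lemma J_lt_r (hx : C.J < x) : C.J < C.r x := by
  by_cases hxS : x ∈ C.S
  · exact J_lt_of_mem_S (r_mem hxS)
  · rwa [r_of_notMem hxS]

lemma lt_r_of_le_J (hj : j ≤ C.J) (hx : j < x) : j < C.r x := by
  by_cases hxS : x ∈ C.S
  · exact lt_of_le_of_lt hj (J_lt_of_mem_S (r_mem hxS))
  · rwa [r_of_notMem hxS]

-- `r` maps the positions after any `j ≤ J` onto themselves.
lemma isDPair_of_isDPair_q (hi : i ∉ C.S) (hj : j ≤ C.J) (h : IsDPair C.q i j) :
    IsDPair C.w i j := by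
  obtain ⟨hij, hv, k, l, hk, hl, hkl, hvk, hvl⟩ := h
  rw [q_of_notMem hi, q_of_le_J hj] at hv
  rw [q_of_notMem hi] at hvk hvl
  exact ⟨hij, hv, C.r k, C.r l, lt_r_of_le_J hj hk, lt_r_of_le_J hj hl,
    C.r.injective.ne hkl, hvk, hvl⟩

lemma isDPair_q : IsDPair C.q C.I C.J := by
  obtain ⟨k, l, hk, hl, hkl⟩ := C.exists_pair_mem_S
  rw [IsDPair, q_of_le_J C.I_lt_J.le, q_of_le_J le_rfl]
  exact ⟨I_lt_J, wI_lt_wJ, k, l, J_lt_of_mem_S hk, J_lt_of_mem_S hl, hkl,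
    q_lt_of_mem_S hk, q_lt_of_mem_S hl⟩

lemma fst_le_of_isDPair_q (h : IsDPair C.q i j) : C.I ≤ i := by
  by_contra! hiI
  have hiS : i ∉ C.S := notMem_S_of_le_J (hiI.trans C.I_lt_J).le
  rcases le_or_gt j C.J with hjJ | hJj
  · exact hiI.not_ge (C.isMin.fst_le (isDPair_of_isDPair_q hiS hjJ h))
  obtain ⟨hij, hv, k, l, hk, hl, hkl, hvk, hvl⟩ := h
  rw [q_of_notMem hiS] at hv hvk hvl
  rcases lt_or_gt_of_ne (C.inj.ne hiI.ne) with hsmall | hbig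
  · exact hiI.not_ge (C.isMin.fst_le ⟨hiI.trans I_lt_J, hsmall.trans wI_lt_wJ, C.r k, C.r l,
      J_lt_r (hJj.trans hk), J_lt_r (hJj.trans hl), C.r.injective.ne hkl, hvk, hvl⟩)
  · have hjS : j ∉ C.S := fun hjS => by
      have := q_lt_of_mem_S hjS
      order
    have below : ∀ m, C.q m < C.w i → C.w m < C.w i := fun m hm => by
      by_cases hmS : m ∈ C.S
      · exact (w_lt_of_mem_S hmS).trans hbig
      · rwa [← q_of_notMem hmS]
    rw [q_of_notMem hjS] at hv
    exact hiI.not_ge (C.isMin.fst_le ⟨hij, hv, k, l, hk, hl, hkl, below k hvk, below l hvl⟩)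

lemma isMinDPair_q : IsMinDPair C.q C.I C.J where
  isDPair := isDPair_q
  fst_le _ _ := fst_le_of_isDPair_q
  snd_le _ h := not_lt.1 fun hjJ =>
    hjJ.not_ge (C.isMin.snd_le (isDPair_of_isDPair_q (notMem_S_of_le_J C.I_lt_J.le) hjJ.le h))

noncomputable def flip (C : MinDPair n) : MinDPair n := ⟨C.q, q_injective, C.I, C.J, isMinDPair_q⟩

lemma S_flip (C : MinDPair n) : C.flip.S = C.S := by
  ext k
  change k ∈ ({k | C.J < k ∧ C.q k < C.q C.I} : Finset _) ↔ _
  simp only [Finset.mem_filter, Finset.mem_univ, true_and, q_of_le_J C.I_lt_J.le]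
  by_cases hk : k ∈ C.S
  · exact iff_of_true ⟨J_lt_of_mem_S hk, q_lt_of_mem_S hk⟩ hk
  · rw [q_of_notMem hk, mem_S]

lemma q_flip (C : MinDPair n) : C.flip.q = C.w := funext fun x => by
  change C.q (C.flip.S.reverseOn x) = C.w x
  rw [S_flip]
  exact q_r x

lemma eq_flip (C : MinDPair n) {C' : MinDPair n} (h : C'.w = C.q) : C' = C.flip := by
  have hmin : IsMinDPair C'.w C.I C.J := h ▸ isMinDPair_q
  obtain ⟨hI, hJ⟩ := C'.isMin.unique hmin
  ext1 <;> assumption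

lemma mem_S_of_q_lt (hJx : C.J < x) (hx : C.q x < C.w C.I) : x ∈ C.S := by
  by_contra hxS
  rw [q_of_notMem hxS] at hx
  exact (wI_lt_of_notMem_S hJx hxS).not_gt hx

lemma wI_lt_q_of_notMem_S (hJx : C.J < x) (hx : x ∉ C.S) : C.w C.I < C.q x :=
  q_of_notMem hx ▸ wI_lt_of_notMem_S hJx hx

lemma w_lt_wI_of_lt_J (hIx : C.I < x) (hxJ : x < C.J) : C.w x < C.w C.I := by
  refine lt_of_le_of_ne (not_lt.1 fun hx => hxJ.not_ge (C.isMin.snd_le ?_)) (C.inj.ne hIx.ne')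
  obtain ⟨k, l, hk, hl, hkl⟩ := C.exists_pair_mem_S
  exact ⟨hIx, hx, k, l, hxJ.trans (J_lt_of_mem_S hk), hxJ.trans (J_lt_of_mem_S hl), hkl,
    w_lt_of_mem_S hk, w_lt_of_mem_S hl⟩

lemma isLRMax_q_iff (t : Fin n) : isLRMax C.q t ↔ isLRMax C.w t := by
  by_cases ht : t ∈ C.S
  · have hIt := I_lt_of_mem_S ht
    refine iff_of_false (fun h => ?_) (fun h => (h C.I hIt).not_gt (w_lt_of_mem_S ht))
    exact (h C.I hIt).not_gt (q_of_le_J C.I_lt_J.le ▸ q_lt_of_mem_S ht)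
  refine forall_congr' fun s => imp_congr_right fun hst => ?_
  by_cases hs : s ∈ C.S
  · have hJt : C.J < t := (J_lt_of_mem_S hs).trans hst
    exact iff_of_true ((q_lt_of_mem_S hs).trans (wI_lt_q_of_notMem_S hJt ht))
      ((w_lt_of_mem_S hs).trans (wI_lt_of_notMem_S hJt ht))
  · rw [q_of_notMem hs, q_of_notMem ht]

lemma w_lt_w_of_lt_I (h2341 : Avoids2341 C.w) (htI : t < C.I) (ht : C.w t < C.w C.I)
    (hs : s ∈ C.S) : C.w t < C.w s := by
  refine lt_of_le_of_ne (not_lt.1 fun hst => ?_) (C.inj.ne (htI.trans (I_lt_of_mem_S hs)).ne)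
  exact h2341 htI C.I_lt_J (J_lt_of_mem_S hs) ht wI_lt_wJ hst

lemma w_lt_w_of_wI_lt (h2143 : Avoids2143 C.w) (hIt : C.I < t) (ht : C.w t < C.w C.I)
    (hty : t < y) (hyz : y < z) (hz : C.w C.I < C.w z) :
    C.w y < C.w z :=
  lt_of_le_of_ne (not_lt.1 fun hzy => h2143 hIt hty hyz ht hz hzy) (C.inj.ne hyz.ne)

lemma I_lt_of_w_lt_of_mem_S (h2341 : Avoids2341 C.w) (hx : C.w x < C.w C.I) (hs : s ∈ C.S)
    (hsx : C.w s < C.w x) : C.I < x := by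
  rcases lt_trichotomy x C.I with hxI | rfl | hxI
  · exact ((w_lt_w_of_lt_I h2341 hxI hx hs).not_gt hsx).elim
  · exact (lt_irrefl _ hx).elim
  · exact hxI

lemma false_of_lt_J_of_J_lt (h2143 : Avoids2143 C.w) (h2341 : Avoids2341 C.w) (hIx : C.I < x)
    (hx : C.w x < C.w C.I) (hxJ : x < C.J) (hJy : C.J < y) (hy : y ∉ C.S) (hyz : y < z)
    (hz : C.w z < C.w x) : False :=
  h2341 hxJ hJy hyz (hx.trans wI_lt_wJ)
    (w_lt_w_of_wI_lt h2143 hIx hx hxJ hJy (wI_lt_of_notMem_S hJy hy)) hz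

/-- An occurrence of 3412 or 3421 at `a b c d` is a D-pair `(a, b)` witnessed by `c, d`; applied
to `C.flip`, this excludes it from `q` as soon as `b` and one of `c, d` lie outside `S`. -/
lemma false_of_isDPair_of_notMem_S (h2143 : Avoids2143 C.w) (h2341 : Avoids2341 C.w)
    (hD : IsDPair C.w x₁ x₂) (hx₂ : x₂ ∉ C.S) (hy : x₂ < y) (hwy : C.w y < C.w x₁)
    (hyS : y ∉ C.S) : False := by
  obtain ⟨h12, hv12, -⟩ := id hD
  rcases (C.isMin.fst_le hD).lt_or_eq with hI | rfl
  swap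
  · exact (hy.trans (lt_J_of_notMem_S hwy hyS)).not_ge (C.isMin.snd_le hD)
  obtain ⟨s, hs⟩ := C.exists_mem_S
  have hJs := J_lt_of_mem_S hs
  rcases lt_or_gt_of_ne (C.inj.ne hI.ne') with hsmall | hbig
  · have hyJ : y < C.J := lt_J_of_notMem_S (hwy.trans hsmall) hyS
    rcases lt_or_gt_of_ne (C.inj.ne (h12.trans (hy.trans (hyJ.trans hJs))).ne) with hws | hws
    · exact h2143 (h12.trans hy) hyJ hJs hwy hws ((w_lt_of_mem_S hs).trans wI_lt_wJ)
    · exact h2341 h12 (hy.trans hyJ) hJs hv12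
        (w_lt_w_of_wI_lt h2143 hI hsmall h12 (hy.trans hyJ) wI_lt_wJ) hws
  · have hJx₁ : C.J ≤ x₁ := not_lt.1 fun hx₁J => (w_lt_wI_of_lt_J hI hx₁J).not_gt hbig
    rcases lt_trichotomy s x₂ with hsx | rfl | hsx
    · have hwy' := wI_lt_of_notMem_S (hJx₁.trans_lt (h12.trans hy)) hyS
      exact h2143 (I_lt_of_mem_S hs) hsx hy (w_lt_of_mem_S hs) hwy' (hwy.trans hv12)
    · exact hx₂ hs
    · exact h2341 hI h12 hsx hbig hv12 (w_lt_of_mem_S hs)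

lemma strictAntiOn_w_S (h3412 : Avoids3412 C.w) : StrictAntiOn C.w C.S := fun _ hk _ hl hkl =>
  lt_of_le_of_ne (not_lt.1 fun h => h3412 C.I_lt_J (J_lt_of_mem_S hk) hkl h (w_lt_of_mem_S hl)
    wI_lt_wJ) (C.inj.ne hkl.ne')

lemma strictMonoOn_w_S (h3421 : Avoids3421 C.w) : StrictMonoOn C.w C.S := fun _ hk _ _ hkl =>
  lt_of_le_of_ne (not_lt.1 fun h => h3421 C.I_lt_J (J_lt_of_mem_S hk) hkl h (w_lt_of_mem_S hk)
    wI_lt_wJ) (C.inj.ne hkl.ne)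

lemma strictMonoOn_q_of_strictAntiOn_w (h : StrictAntiOn C.w C.S) : StrictMonoOn C.q C.S :=
  fun _ hk _ hl hkl => h (r_mem hl) (r_mem hk) (r_lt_r hk hl hkl)

lemma strictAntiOn_q_of_strictMonoOn_w (h : StrictMonoOn C.w C.S) : StrictAntiOn C.q C.S :=
  fun _ hk _ hl hkl => h (r_mem hl) (r_mem hk) (r_lt_r hk hl hkl)

lemma q_lt_q_of_mem_S (h3412 : Avoids3412 C.w) (ha : a ∈ C.S) (hab : a < b) : C.q a < C.q b := by
  by_cases hb : b ∈ C.S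
  · exact strictMonoOn_q_of_strictAntiOn_w (strictAntiOn_w_S h3412) ha hb hab
  · exact (q_lt_of_mem_S ha).trans (wI_lt_q_of_notMem_S ((J_lt_of_mem_S ha).trans hab) hb)

lemma avoids2341_q_of_avoids3412 (h2341 : Avoids2341 C.w) (h3412 : Avoids3412 C.w) :
    Avoids2341 C.q := by
  intro p₁ p₂ p₃ p₄ h12 h23 h34 hv12 hv23 hv41
  have notMem : ∀ {p}, p < p₄ → C.q p₄ < C.q p → p ∉ C.S := fun hp hq hpS =>
    (q_lt_q_of_mem_S h3412 hpS hp).not_gt hq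
  have hp₁ := notMem (h12.trans (h23.trans h34)) hv41
  have hp₂ := notMem (h23.trans h34) (hv41.trans hv12)
  have hp₃ := notMem h34 (hv41.trans (hv12.trans hv23))
  simp only [q_of_notMem hp₁, q_of_notMem hp₂, q_of_notMem hp₃] at hv12 hv23 hv41
  by_cases hp₄ : p₄ ∈ C.S
  swap
  · exact h2341 h12 h23 h34 hv12 hv23 (q_of_notMem hp₄ ▸ hv41)
  rcases lt_trichotomy p₃ (C.r p₄) with h | h | h
  · exact h2341 h12 h23 h hv12 hv23 hv41
  · exact hp₃ (h ▸ r_mem hp₄)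
  · have := strictAntiOn_w_S h3412 (r_mem hp₄) hp₄ (h.trans h34)
    exact h2341 h12 h23 h34 hv12 hv23 (this.trans hv41)

lemma avoids2143_q_of_avoids3412 (h2143 : Avoids2143 C.w) (h2341 : Avoids2341 C.w)
    (h3412 : Avoids3412 C.w) : Avoids2143 C.q := by
  intro p₁ p₂ p₃ p₄ h12 h23 h34 hv21 hv14 hv43
  have hp₁ : p₁ ∉ C.S := fun h => (q_lt_q_of_mem_S h3412 h h12).not_gt hv21
  have hp₃ : p₃ ∉ C.S := fun h => (q_lt_q_of_mem_S h3412 h h34).not_gt hv43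
  simp only [q_of_notMem hp₁, q_of_notMem hp₃] at hv21 hv14 hv43
  by_cases hp₂ : p₂ ∈ C.S <;> by_cases hp₄ : p₄ ∈ C.S
  · have hw₁ : C.w p₁ < C.w C.I := hv14.trans (q_lt_of_mem_S hp₄)
    have hIp₁ := I_lt_of_w_lt_of_mem_S h2341 hw₁ (r_mem hp₂) hv21
    have hJp₃ : C.J < p₃ := (J_lt_of_mem_S hp₂).trans h23
    have key : ∀ {z}, p₃ < z → C.w z < C.w p₁ → False :=
      false_of_lt_J_of_J_lt h2143 h2341 hIp₁ hw₁ (lt_J_of_notMem_S hw₁ hp₁) hJp₃ hp₃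
    rcases lt_trichotomy p₃ (C.r p₂) with h | h | h
    · exact key h hv21
    · exact hp₃ (h ▸ r_mem hp₂)
    · exact key h34 ((strictAntiOn_w_S h3412 (r_mem hp₂) hp₄ (h.trans h34)).trans hv21)
  · rw [q_of_notMem hp₄] at hv14 hv43
    rcases lt_or_gt_of_ne (C.inj.ne h12.ne') with h | h
    · exact h2143 h12 h23 h34 h hv14 hv43
    · have hw₁ : C.w p₁ < C.w C.I := h.trans (w_lt_of_mem_S hp₂)
      exact h2143 (I_lt_of_w_lt_of_mem_S h2341 hw₁ (r_mem hp₂) hv21) (h12.trans h23) h34 hw₁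
        (wI_lt_of_notMem_S ((J_lt_of_mem_S hp₂).trans (h23.trans h34)) hp₄) hv43
  · rw [q_of_notMem hp₂] at hv21
    rcases lt_trichotomy p₃ (C.r p₄) with h | h | h
    · exact h2143 h12 h23 h hv21 hv14 hv43
    · exact hp₃ (h ▸ r_mem hp₄)
    have hJp₃ : C.J < p₃ := (J_lt_of_mem_S (r_mem hp₄)).trans h
    rcases lt_or_gt_of_ne (C.inj.ne (h12.trans (h23.trans h34)).ne) with h' | h'
    · exact h2143 h12 h23 h34 hv21 h' ((w_lt_of_mem_S hp₄).trans (wI_lt_of_notMem_S hJp₃ hp₃))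
    · have hw₁ : C.w p₁ < C.w C.I := hv14.trans (q_lt_of_mem_S hp₄)
      exact false_of_lt_J_of_J_lt h2143 h2341 (I_lt_of_w_lt_of_mem_S h2341 hw₁ hp₄ h') hw₁
        (lt_J_of_notMem_S hw₁ hp₁) hJp₃ hp₃ h34 h'
  · simp only [q_of_notMem hp₂, q_of_notMem hp₄] at hv21 hv14 hv43
    exact h2143 h12 h23 h34 hv21 hv14 hv43

lemma avoids3421_q_of_avoids3412 (h3412 : Avoids3412 C.w) (hq2143 : Avoids2143 C.q)
    (hq2341 : Avoids2341 C.q) : Avoids3421 C.q := by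
  intro p₁ p₂ p₃ p₄ h12 h23 h34 hv43 hv31 hv12
  have hp₃ : p₃ ∉ C.S := fun h => (q_lt_q_of_mem_S h3412 h h34).not_gt hv43
  have hp₂ : p₂ ∉ C.S := fun h => (q_lt_q_of_mem_S h3412 h h23).not_gt (hv31.trans hv12)
  exact C.flip.false_of_isDPair_of_notMem_S hq2143 hq2341
    ⟨h12, hv12, p₃, p₄, h23, h23.trans h34, h34.ne, hv31, hv43.trans hv31⟩
    (C.S_flip ▸ hp₂) h23 hv31 (C.S_flip ▸ hp₃)

lemma false_of_w_lt_w_of_mem_S (h2143 : Avoids2143 C.w) (hxy : x < y) (hy : y ∉ C.S)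
    (hyx : C.w y < C.w x) (hs : s ∈ C.S) (hxs : C.w x < C.w s) : False :=
  h2143 hxy (lt_J_of_notMem_S (hyx.trans (hxs.trans (w_lt_of_mem_S hs))) hy) (J_lt_of_mem_S hs)
    hyx hxs ((w_lt_of_mem_S hs).trans wI_lt_wJ)

lemma false_of_r_lt_of_lt (h2143 : Avoids2143 C.w) (h2341 : Avoids2341 C.w) (hx : x ∉ C.S)
    (hwx : C.w x < C.w C.I) (hd : d ∈ C.S) (hdy : C.r d < y) (hy : y < d) (hyS : y ∉ C.S)
    (hqd : C.q d < C.w x) : False := by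
  have hxJ := lt_J_of_notMem_S hwx hx
  have hJy : C.J < y := (J_lt_of_mem_S (r_mem hd)).trans hdy
  rcases lt_or_gt_of_ne (C.inj.ne (hxJ.trans (hJy.trans hy)).ne) with h | h
  · exact h2143 (hxJ.trans (J_lt_of_mem_S (r_mem hd))) hdy hy hqd h
      ((w_lt_of_mem_S hd).trans (wI_lt_of_notMem_S hJy hyS))
  · exact false_of_lt_J_of_J_lt h2143 h2341 (I_lt_of_w_lt_of_mem_S h2341 hwx hd h) hwx hxJ hJy
      hyS hy h

lemma avoids2143_q_of_avoids3421 (h2143 : Avoids2143 C.w) (h3421 : Avoids3421 C.w) :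
    Avoids2143 C.q := by
  intro p₁ p₂ p₃ p₄ h12 h23 h34 hv21 hv14 hv43
  have hanti := strictAntiOn_q_of_strictMonoOn_w (strictMonoOn_w_S h3421)
  have early : ∀ {c}, c ∈ C.S → p₂ < c → C.q p₁ < C.q c → False := by
    intro c hc h2c h1c
    have hp₁ : p₁ ∉ C.S := fun h => (hanti h hc (h12.trans h2c)).not_gt h1c
    have hp₂ : p₂ ∉ C.S := fun h => (hanti h hc h2c).not_gt (hv21.trans h1c)
    simp only [q_of_notMem hp₁, q_of_notMem hp₂] at hv21 h1c
    exact false_of_w_lt_w_of_mem_S h2143 h12 hp₂ hv21 (r_mem hc) h1c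
  by_cases hp₃ : p₃ ∈ C.S
  · exact early hp₃ h23 (hv14.trans hv43)
  by_cases hp₄ : p₄ ∈ C.S
  · exact early hp₄ (h23.trans h34) hv14
  simp only [q_of_notMem hp₃, q_of_notMem hp₄] at hv14 hv43
  have late : ∀ {x}, x ∈ C.S → x < p₃ → False := fun hx hx₃ =>
    h2143 (I_lt_of_mem_S hx) hx₃ h34 (w_lt_of_mem_S hx)
      (wI_lt_of_notMem_S ((J_lt_of_mem_S hx).trans (hx₃.trans h34)) hp₄) hv43
  by_cases hp₁ : p₁ ∈ C.S
  · exact late hp₁ (h12.trans h23)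
  by_cases hp₂ : p₂ ∈ C.S
  · exact late hp₂ h23
  simp only [q_of_notMem hp₁, q_of_notMem hp₂] at hv21 hv14
  exact h2143 h12 h23 h34 hv21 hv14 hv43

lemma avoids2341_q_of_avoids3421 (h2143 : Avoids2143 C.w) (h2341 : Avoids2341 C.w)
    (h3421 : Avoids3421 C.w) : Avoids2341 C.q := by
  intro p₁ p₂ p₃ p₄ h12 h23 h34 hv12 hv23 hv41
  have hanti := strictAntiOn_q_of_strictMonoOn_w (strictMonoOn_w_S h3421)
  by_cases hp₃ : p₃ ∈ C.S
  · have hp₄ : p₄ ∈ C.S := mem_S_of_q_lt ((J_lt_of_mem_S hp₃).trans h34)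
      ((hv41.trans (hv12.trans hv23)).trans (q_lt_of_mem_S hp₃))
    have hp₁ : p₁ ∉ C.S := fun h => (hanti h hp₃ (h12.trans h23)).not_gt (hv12.trans hv23)
    have hp₂ : p₂ ∉ C.S := fun h => (hanti h hp₃ h23).not_gt hv23
    simp only [q_of_notMem hp₁, q_of_notMem hp₂] at hv12 hv23 hv41
    have hw₂ : C.w p₂ < C.w C.I := hv23.trans (q_lt_of_mem_S hp₃)
    exact h2341 h12 (lt_J_of_notMem_S hw₂ hp₂) (J_lt_of_mem_S (r_mem hp₄)) hv12
      (hw₂.trans wI_lt_wJ) hv41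
  by_cases hp₂ : p₂ ∈ C.S
  · have hp₄ : p₄ ∈ C.S := mem_S_of_q_lt ((J_lt_of_mem_S hp₂).trans (h23.trans h34))
      ((hv41.trans hv12).trans (q_lt_of_mem_S hp₂))
    have hp₁ : p₁ ∉ C.S := fun h => (hanti h hp₂ h12).not_gt hv12
    rw [q_of_notMem hp₁] at hv12 hv41
    have hw₁ : C.w p₁ < C.w C.I := hv12.trans (q_lt_of_mem_S hp₂)
    rcases lt_trichotomy p₃ (C.r p₄) with h | h | h
    · exact false_of_lt_J_of_J_lt h2143 h2341 (I_lt_of_w_lt_of_mem_S h2341 hw₁ (r_mem hp₄) hv41)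
        hw₁ (lt_J_of_notMem_S hw₁ hp₁) ((J_lt_of_mem_S hp₂).trans h23) hp₃ h hv41
    · exact hp₃ (h ▸ r_mem hp₄)
    · exact false_of_r_lt_of_lt h2143 h2341 hp₁ hw₁ hp₄ h h34 hp₃ hv41
  simp only [q_of_notMem hp₂, q_of_notMem hp₃] at hv12 hv23
  by_cases hp₁ : p₁ ∈ C.S
  · have hp₄ : p₄ ∈ C.S := mem_S_of_q_lt ((J_lt_of_mem_S hp₁).trans (h12.trans (h23.trans h34)))
      (hv41.trans (q_lt_of_mem_S hp₁))
    exact h2341 ((I_lt_of_mem_S hp₁).trans h12) h23 h34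
      (wI_lt_of_notMem_S ((J_lt_of_mem_S hp₁).trans h12) hp₂) hv23 (w_lt_of_mem_S hp₄)
  rw [q_of_notMem hp₁] at hv12 hv41
  by_cases hp₄ : p₄ ∈ C.S
  swap
  · exact h2341 h12 h23 h34 hv12 hv23 (q_of_notMem hp₄ ▸ hv41)
  rcases lt_or_gt_of_ne (C.inj.ne (h12.trans (h23.trans h34)).ne') with h | h
  · exact h2341 h12 h23 h34 hv12 hv23 h
  rcases lt_trichotomy p₃ (C.r p₄) with h' | h' | h'
  · exact h2341 h12 h23 h' hv12 hv23 hv41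
  · exact hp₃ (h' ▸ r_mem hp₄)
  · exact false_of_r_lt_of_lt h2143 h2341 hp₁ (h.trans (w_lt_of_mem_S hp₄)) hp₄ h' h34 hp₃ hv41

lemma avoids3412_q_of_avoids3421 (h3421 : Avoids3421 C.w) (hq2143 : Avoids2143 C.q)
    (hq2341 : Avoids2341 C.q) : Avoids3412 C.q := by
  intro p₁ p₂ p₃ p₄ h12 h23 h34 hv34 hv41 hv12
  have hanti := strictAntiOn_q_of_strictMonoOn_w (strictMonoOn_w_S h3421)
  have hp₃₄ : p₃ ∈ C.S → p₄ ∉ C.S := fun hp₃ hp₄ => (hanti hp₃ hp₄ h34).not_gt hv34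
  have hp₂ : p₂ ∉ C.S := fun hp₂ =>
    have hq := q_lt_of_mem_S hp₂
    have hJ := J_lt_of_mem_S hp₂
    hp₃₄ (mem_S_of_q_lt (hJ.trans h23) (by order))
      (mem_S_of_q_lt (hJ.trans (h23.trans h34)) (by order))
  have hD : IsDPair C.q p₁ p₂ :=
    ⟨h12, hv12, p₃, p₄, h23, h23.trans h34, h34.ne, hv34.trans hv41, hv41⟩
  by_cases hp₃ : p₃ ∈ C.S
  · exact C.flip.false_of_isDPair_of_notMem_S hq2143 hq2341 hD (C.S_flip ▸ hp₂)
      (h23.trans h34) hv41 (C.S_flip ▸ hp₃₄ hp₃)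
  · exact C.flip.false_of_isDPair_of_notMem_S hq2143 hq2341 hD (C.S_flip ▸ hp₂) h23
      (hv34.trans hv41) (C.S_flip ▸ hp₃)

end MinDPair

section Bijection

variable {n : ℕ} {w : Fin n → Fin n}

lemma avoids3412_of_not_isDPair (h : ¬ ∃ i j, IsDPair w i j) : Avoids3412 w :=
  fun _ _ _ _ h12 h23 h34 hv34 hv41 hv12 =>
    h ⟨_, _, h12, hv12, _, _, h23, h23.trans h34, h34.ne, hv34.trans hv41, hv41⟩

lemma avoids3421_of_not_isDPair (h : ¬ ∃ i j, IsDPair w i j) : Avoids3421 w :=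
  fun _ _ _ _ h12 h23 h34 hv43 hv31 hv12 =>
    h ⟨_, _, h12, hv12, _, _, h23, h23.trans h34, h34.ne, hv31, hv43.trans hv31⟩

noncomputable def MinDPair.ofPerm (π : Equiv.Perm (Fin n)) (h : ∃ i j, IsDPair π i j) :
    MinDPair n :=
  ⟨π, π.injective, _, _, (exists_isMinDPair h).choose_spec.choose_spec⟩

open Classical in
noncomputable def dPairFlip (π : Equiv.Perm (Fin n)) : Equiv.Perm (Fin n) :=
  if h : ∃ i j, IsDPair π i j then (MinDPair.ofPerm π h).r.trans π else π

variable {π : Equiv.Perm (Fin n)}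

lemma coe_dPairFlip (h : ∃ i j, IsDPair π i j) : ⇑(dPairFlip π) = (MinDPair.ofPerm π h).q := by
  ext x
  simp [dPairFlip, h, MinDPair.q, MinDPair.ofPerm]

lemma dPairFlip_of_not_isDPair (h : ¬ ∃ i j, IsDPair π i j) : dPairFlip π = π := dif_neg h

lemma dPairFlip_dPairFlip (π : Equiv.Perm (Fin n)) : dPairFlip (dPairFlip π) = π := by
  by_cases h : ∃ i j, IsDPair π i j
  · set C := MinDPair.ofPerm π h
    have h' : ∃ i j, IsDPair (dPairFlip π) i j :=
      ⟨C.I, C.J, coe_dPairFlip h ▸ MinDPair.isDPair_q⟩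
    have hC : MinDPair.ofPerm (dPairFlip π) h' = C.flip := C.eq_flip (coe_dPairFlip h)
    ext x
    rw [coe_dPairFlip h', hC, C.q_flip]
    rfl
  · rw [dPairFlip_of_not_isDPair h, dPairFlip_of_not_isDPair h]

lemma isLRMax_dPairFlip_iff (π : Equiv.Perm (Fin n)) (i : Fin n) :
    isLRMax (dPairFlip π) i ↔ isLRMax π i := by
  by_cases h : ∃ i j, IsDPair π i j
  · rw [coe_dPairFlip h]
    exact MinDPair.isLRMax_q_iff i
  · rw [dPairFlip_of_not_isDPair h]

lemma dPairFlip_avoids_of_avoids3412 (hπ : avoidsPat π ![1, 0, 3, 2] ∧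
      avoidsPat π ![1, 2, 3, 0] ∧ avoidsPat π ![2, 3, 0, 1]) :
    avoidsPat (dPairFlip π) ![1, 0, 3, 2] ∧ avoidsPat (dPairFlip π) ![1, 2, 3, 0] ∧
      avoidsPat (dPairFlip π) ![2, 3, 1, 0] := by
  simp only [avoidsPat_iff_avoids2143, avoidsPat_iff_avoids2341, avoidsPat_iff_avoids3412,
    avoidsPat_iff_avoids3421] at hπ ⊢
  obtain ⟨h2143, h2341, h3412⟩ := hπ
  by_cases h : ∃ i j, IsDPair π i j
  · set C := MinDPair.ofPerm π h
    have hq2143 := C.avoids2143_q_of_avoids3412 h2143 h2341 h3412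
    have hq2341 := C.avoids2341_q_of_avoids3412 h2341 h3412
    rw [coe_dPairFlip h]
    exact ⟨hq2143, hq2341, C.avoids3421_q_of_avoids3412 h3412 hq2143 hq2341⟩
  · rw [dPairFlip_of_not_isDPair h]
    exact ⟨h2143, h2341, avoids3421_of_not_isDPair h⟩

lemma dPairFlip_avoids_of_avoids3421 (hπ : avoidsPat π ![1, 0, 3, 2] ∧
      avoidsPat π ![1, 2, 3, 0] ∧ avoidsPat π ![2, 3, 1, 0]) :
    avoidsPat (dPairFlip π) ![1, 0, 3, 2] ∧ avoidsPat (dPairFlip π) ![1, 2, 3, 0] ∧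
      avoidsPat (dPairFlip π) ![2, 3, 0, 1] := by
  simp only [avoidsPat_iff_avoids2143, avoidsPat_iff_avoids2341, avoidsPat_iff_avoids3412,
    avoidsPat_iff_avoids3421] at hπ ⊢
  obtain ⟨h2143, h2341, h3421⟩ := hπ
  by_cases h : ∃ i j, IsDPair π i j
  · set C := MinDPair.ofPerm π h
    have hq2143 := C.avoids2143_q_of_avoids3421 h2143 h3421
    have hq2341 := C.avoids2341_q_of_avoids3421 h2143 h2341 h3421
    rw [coe_dPairFlip h]
    exact ⟨hq2143, hq2341, C.avoids3412_q_of_avoids3421 h3421 hq2143 hq2341⟩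
  · rw [dPairFlip_of_not_isDPair h]
    exact ⟨h2143, h2341, avoids3412_of_not_isDPair h⟩

end Bijection

/-- There is a bijection between {2143,2341,3412}-avoiders and {2143,2341,3421}-avoiders
of [n] that preserves the positions (hence also the number) of left-right maxima. -/
theorem stmt7 (n : ℕ) :
    ∃ e : {π : Equiv.Perm (Fin n) //
            avoidsPat (⇑π) ![1,0,3,2] ∧ avoidsPat (⇑π) ![1,2,3,0] ∧
              avoidsPat (⇑π) ![2,3,0,1]} ≃
          {π : Equiv.Perm (Fin n) //
            avoidsPat (⇑π) ![1,0,3,2] ∧ avoidsPat (⇑π) ![1,2,3,0] ∧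
              avoidsPat (⇑π) ![2,3,1,0]},
      ∀ π, ∀ i : Fin n, isLRMax (⇑(e π).1) i ↔ isLRMax (⇑π.1) i :=
  ⟨{ toFun := fun π => ⟨dPairFlip π.1, dPairFlip_avoids_of_avoids3412 π.2⟩
     invFun := fun π => ⟨dPairFlip π.1, dPairFlip_avoids_of_avoids3421 π.2⟩
     left_inv := fun π => Subtype.ext (dPairFlip_dPairFlip π.1)
     right_inv := fun π => Subtype.ext (dPairFlip_dPairFlip π.1) },
    fun π => isLRMax_dPairFlip_iff π.1⟩
end

section
/- Let T = {2413, 2431, 3214}. If π ∈ S_n avoids T and begins with the two letters i, j where 2 ≤ j < i ≤ n−1 and j ≥ 2, then π has the form i j (j+1)(j+2)⋯n (with i omitted from the increasing run) followed by a T-avoiding permutation of [j−1]; consequently the number of such permutations equals |S_{j−1}(T)|. -/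
section Patterns

variable {n : ℕ} (π : Fin n → Fin n) {p₀ p₁ p₂ p₃ : Fin n}

lemma containsPat_1302_of_lt (h₀₁ : p₀ < p₁) (h₁₂ : p₁ < p₂) (h₂₃ : p₂ < p₃)
    (hA : π p₂ < π p₀) (hB : π p₀ < π p₃) (hC : π p₃ < π p₁) :
    containsPat π ![1,3,0,2] := by
  refine ⟨![p₀, p₁, p₂, p₃], ?_, ?_⟩ <;>
  · simp only [StrictMono, Fin.forall_fin_succ, IsEmpty.forall_iff, Fin.lt_def] at *
    simp
    omega

lemma containsPat_1320_of_lt (h₀₁ : p₀ < p₁) (h₁₂ : p₁ < p₂) (h₂₃ : p₂ < p₃)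
    (hA : π p₃ < π p₀) (hB : π p₀ < π p₂) (hC : π p₂ < π p₁) :
    containsPat π ![1,3,2,0] := by
  refine ⟨![p₀, p₁, p₂, p₃], ?_, ?_⟩ <;>
  · simp only [StrictMono, Fin.forall_fin_succ, IsEmpty.forall_iff, Fin.lt_def] at *
    simp
    omega

lemma containsPat_2103_of_lt (h₀₁ : p₀ < p₁) (h₁₂ : p₁ < p₂) (h₂₃ : p₂ < p₃)
    (hA : π p₂ < π p₁) (hB : π p₁ < π p₀) (hC : π p₀ < π p₃) :
    containsPat π ![2,1,0,3] := by
  refine ⟨![p₀, p₁, p₂, p₃], ?_, ?_⟩ <;>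
  · simp only [StrictMono, Fin.forall_fin_succ, IsEmpty.forall_iff, Fin.lt_def] at *
    simp
    omega

end Patterns

section Tail

variable {n m t : ℕ} {π : Fin n → Fin n} {σ : Fin m → Fin m}

lemma containsPat_of_tail (htm : t + m = n)
    (htail : ∀ (p : Fin n) (hp : t ≤ p), (π p : ℕ) = σ ⟨p - t, by omega⟩)
    {k : ℕ} {τ : Fin k → Fin k} (h : containsPat σ τ) : containsPat π τ := by
  obtain ⟨f, hf, hτ⟩ := h
  refine ⟨fun a => ⟨t + f a, by omega⟩, fun a b hab => by simpa using hf hab, fun a b => ?_⟩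
  rw [hτ, Fin.lt_def, Fin.lt_def, htail _ (by simp), htail _ (by simp)]
  simp

/-- An occurrence starting in the head `π 0, …, π (t - 1)` stays in the head up to index `c`, as
head entries exceed tail entries; but the head has no descent after its first entry. -/
lemma containsPat_tail_of_skew (htm : t + m = n)
    (htail : ∀ (p : Fin n) (hp : t ≤ p), (π p : ℕ) = σ ⟨p - t, by omega⟩)
    (hsep : ∀ p q : Fin n, p < t → t ≤ q → π q < π p)
    (hrun : ∀ p q : Fin n, 0 < (p : ℕ) → p < q → q < t → π p < π q)
    {k : ℕ} {τ : Fin (k + 1) → Fin (k + 1)}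
    (hτ : ∃ b b' c : Fin (k + 1), 0 < b ∧ b < b' ∧ b' ≤ c ∧ τ 0 < τ c ∧ τ b' < τ b)
    (h : containsPat π τ) : containsPat σ τ := by
  obtain ⟨f, hf, hfτ⟩ := h
  by_cases h0 : t ≤ f 0
  · have ht : ∀ a, t ≤ f a := fun a => h0.trans (hf.monotone (Fin.zero_le a))
    refine ⟨fun a => ⟨f a - t, by omega⟩, fun a b hab => ?_, fun a b => ?_⟩
    · have := hf hab
      have := ht a
      simp only [Fin.lt_def] at *
      omega
    · rw [hfτ, Fin.lt_def, Fin.lt_def, htail _ (ht a), htail _ (ht b)]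
  · obtain ⟨b, b', c, hb, hbb', hb'c, hc, hb'⟩ := hτ
    have hct : f c < t := by
      by_contra hct
      exact lt_asymm ((hfτ 0 c).1 hc) (hsep _ _ (by omega) (by omega))
    have := hf hb
    have := hf.monotone hb'c
    exact absurd ((hfτ b' b).1 hb') (lt_asymm (hrun _ _ (by omega) (hf hbb') (by omega)))

end Tail

section RunValue

/-- The (`0`-indexed) entry at position `k ≥ 1` of the run `j - 1, j, j + 1, …` from which the
value `i - 1` is omitted. -/
def runVal (i j k : ℕ) : ℕ := if j + k - 1 < i then j + k - 2 else j + k - 1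

variable {i j : ℕ}

lemma runVal_one (hij : j < i) : runVal i j 1 = j - 1 := by
  unfold runVal; split_ifs <;> omega

lemma runVal_lt_runVal (hj : 1 ≤ j) {a b : ℕ} (ha : 1 ≤ a) (hab : a < b) :
    runVal i j a < runVal i j b := by
  unfold runVal; split_ifs <;> omega

lemma le_runVal {k : ℕ} (hk : 1 ≤ k) : j - 1 ≤ runVal i j k := by
  unfold runVal; split_ifs <;> omega

lemma runVal_le (i j k : ℕ) : runVal i j k ≤ j + k - 1 := by
  unfold runVal; split_ifs <;> omega

lemma runVal_ne (hj : 1 ≤ j) (hij : j < i) {k : ℕ} (hk : 1 ≤ k) : runVal i j k ≠ i - 1 := by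
  unfold runVal; split_ifs <;> omega

lemma eq_runVal_of_lt_of_le {k v : ℕ} (hk : 2 ≤ k) (hlt : runVal i j (k - 1) < v)
    (hle : v ≤ runVal i j k) (hv : v ≠ i - 1) : v = runVal i j k := by
  unfold runVal at *; split_ifs at * <;> omega

lemma exists_runVal_eq {n v : ℕ} (hij : j < i) (hin : i < n) (hjv : j - 1 ≤ v)
    (hvn : v < n) (hv : v ≠ i - 1) : ∃ k, 1 ≤ k ∧ k + j ≤ n ∧ runVal i j k = v := by
  rcases Nat.lt_or_gt_of_ne hv with h | h
  · exact ⟨v + 2 - j, by omega, by omega, by unfold runVal; split_ifs <;> omega⟩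
  · exact ⟨v + 1 - j, by omega, by omega, by unfold runVal; split_ifs <;> omega⟩

end RunValue

section Structure

variable {n i j : ℕ} {π : Equiv.Perm (Fin n)}

lemma val_eq_of_val_apply_eq (π : Equiv.Perm (Fin n)) {a b : Fin n} (h : (π a : ℕ) = π b) :
    (a : ℕ) = b := by
  rw [π.injective (Fin.ext h)]

lemma val_eq_of_val_apply_eq_mk (π : Equiv.Perm (Fin n)) {a : Fin n} {k : ℕ}
    (hk : k < n := by omega) (h : (π a : ℕ) = π ⟨k, hk⟩) : (a : ℕ) = k :=
  val_eq_of_val_apply_eq π h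

lemma val_apply_eq_of_val_eq (π : Fin n → Fin n) {a : Fin n} {k : ℕ} (hk : k < n := by omega)
    (h : (a : ℕ) = k) : (π a : ℕ) = π ⟨k, hk⟩ := by
  subst h
  rfl

lemma exists_val_apply_eq (π : Equiv.Perm (Fin n)) {v : ℕ} (hv : v < n) :
    ∃ p, (π p : ℕ) = v :=
  ⟨π.symm ⟨v, hv⟩, by simp⟩

/-- Otherwise the maximum `n - 1` completes a `2103` (if it comes after `p`) or a `1302` (if it
comes before). -/
lemma lt_apply_of_lt_apply (hij : j < i) (hin : i < n)
    (h1302 : avoidsPat π ![1,3,0,2]) (h2103 : avoidsPat π ![2,1,0,3])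
    (hp₀ : (π ⟨0, by omega⟩ : ℕ) = i - 1) (hp₁ : (π ⟨1, by omega⟩ : ℕ) = j - 1)
    {p q : Fin n} (hp : 2 ≤ (p : ℕ)) (hpq : p < q) (hq : j - 1 < π q) : j - 1 < π p := by
  by_contra! hpj
  obtain ⟨m, hm⟩ := exists_val_apply_eq π (v := n - 1) (by omega)
  have := val_eq_of_val_apply_eq_mk π (a := p) (k := 1)
  have := val_apply_eq_of_val_eq π (a := m) (k := 0)
  have := val_apply_eq_of_val_eq π (a := m) (k := 1)
  have := val_eq_of_val_apply_eq π (a := m) (b := q)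
  have := (π q).isLt
  rcases lt_trichotomy p m with hpm | rfl | hmp
  · exact h2103 (containsPat_2103_of_lt π (p₀ := ⟨0, by omega⟩) (p₁ := ⟨1, by omega⟩)
      (Fin.mk_lt_mk.2 (by omega)) (show 1 < (p : ℕ) by omega) hpm (by omega) (by omega)
      (by omega))
  · omega
  · exact h1302 (containsPat_1302_of_lt π (p₀ := ⟨1, by omega⟩) (show 1 < (m : ℕ) by omega)
      hmp hpq (by omega) (by omega) (by omega))

/-- An inversion among entries above `j - 1`, followed by the entry `0`, would be a `1320`. -/
lemma apply_lt_of_lt_apply (hj : 2 ≤ j) (hij : j < i) (hin : i < n)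
    (h1302 : avoidsPat π ![1,3,0,2]) (h1320 : avoidsPat π ![1,3,2,0])
    (h2103 : avoidsPat π ![2,1,0,3])
    (hp₀ : (π ⟨0, by omega⟩ : ℕ) = i - 1) (hp₁ : (π ⟨1, by omega⟩ : ℕ) = j - 1)
    {p q : Fin n} (hp : 1 ≤ (p : ℕ)) (hpq : p < q) (hq : j - 1 < π q) : π p < π q := by
  rcases (show (p : ℕ) = 1 ∨ 2 ≤ (p : ℕ) by omega) with hp1 | hp2
  · rw [show p = ⟨1, by omega⟩ from Fin.ext hp1]
    omega
  have hpj := lt_apply_of_lt_apply hij hin h1302 h2103 hp₀ hp₁ hp2 hpq hq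
  obtain ⟨r, hr⟩ := exists_val_apply_eq π (v := 0) (by omega)
  have := val_apply_eq_of_val_eq π (a := r) (k := 0)
  have := val_apply_eq_of_val_eq π (a := r) (k := 1)
  have hqr : q < r := by
    by_contra! hrq
    rcases hrq.lt_or_eq with hrq | rfl
    · have := lt_apply_of_lt_apply hij hin h1302 h2103 hp₀ hp₁ (p := r) (q := q) (by omega)
        hrq hq
      omega
    · omega
  have := val_eq_of_val_apply_eq π (a := p) (b := q)
  by_contra! hqp
  exact h1320 (containsPat_1320_of_lt π (p₀ := ⟨1, by omega⟩) (show 1 < (p : ℕ) by omega)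
    hpq hqr (by omega) (by omega) (by omega))

lemma apply_eq_runVal (hj : 2 ≤ j) (hij : j < i) (hin : i < n)
    (h1302 : avoidsPat π ![1,3,0,2]) (h1320 : avoidsPat π ![1,3,2,0])
    (h2103 : avoidsPat π ![2,1,0,3])
    (hp₀ : (π ⟨0, by omega⟩ : ℕ) = i - 1) (hp₁ : (π ⟨1, by omega⟩ : ℕ) = j - 1)
    (k : ℕ) (hk : k < n) (hk1 : 1 ≤ k) (hkj : k + j ≤ n) : (π ⟨k, hk⟩ : ℕ) = runVal i j k := by
  induction k using Nat.strong_induction_on with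
  | _ k ih =>
  rcases (show k = 1 ∨ 2 ≤ k by omega) with rfl | hk2
  · rw [hp₁, runVal_one hij]
  obtain ⟨q, hq⟩ := exists_val_apply_eq π (v := runVal i j k) (by have := runVal_le i j k; omega)
  have hkq : k ≤ q := by
    by_contra! hqk
    have := val_apply_eq_of_val_eq π (a := q) (k := 0)
    have := runVal_ne (by omega) hij (show 1 ≤ k by omega)
    have : (π q : ℕ) = runVal i j q := by simpa using ih q hqk q.isLt (by omega) (by omega)
    have := runVal_lt_runVal (i := i) (j := j) (by omega) (a := q) (b := k)
    omega
  have hjk : j - 1 < runVal i j k := runVal_one hij ▸ runVal_lt_runVal (by omega) le_rfl hk2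
  have hkj' : j - 1 < π ⟨k, hk⟩ := by
    rcases hkq.eq_or_lt with hkq | hkq
    · rw [show (⟨k, hk⟩ : Fin n) = q from Fin.ext hkq]
      omega
    · exact lt_apply_of_lt_apply hij hin h1302 h2103 hp₀ hp₁ (p := ⟨k, hk⟩) hk2 hkq (by omega)
  have hle : (π ⟨k, hk⟩ : ℕ) ≤ runVal i j k := by
    rcases hkq.eq_or_lt with hkq | hkq
    · rw [show (⟨k, hk⟩ : Fin n) = q from Fin.ext hkq, hq]
    · exact hq ▸ (apply_lt_of_lt_apply hj hij hin h1302 h1320 h2103 hp₀ hp₁ (p := ⟨k, hk⟩)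
        hk1 hkq (by omega)).le
  have hprev : runVal i j (k - 1) < π ⟨k, hk⟩ := by
    rw [← ih (k - 1) (by omega) (by omega) (by omega) (by omega)]
    exact apply_lt_of_lt_apply hj hij hin h1302 h1320 h2103 hp₀ hp₁ (p := ⟨k - 1, by omega⟩)
      (by simp; omega) (Fin.mk_lt_mk.2 (by omega)) hkj'
  have hk0 : (π ⟨k, hk⟩ : ℕ) ≠ i - 1 := by
    intro h
    have := val_eq_of_val_apply_eq π (h.trans hp₀.symm)
    simp only at this
    omega
  exact eq_runVal_of_lt_of_le hk2 hprev hle hk0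

lemma apply_lt_of_sub_lt (hj : 2 ≤ j) (hij : j < i) (hin : i < n)
    (h1302 : avoidsPat π ![1,3,0,2]) (h1320 : avoidsPat π ![1,3,2,0])
    (h2103 : avoidsPat π ![2,1,0,3])
    (hp₀ : (π ⟨0, by omega⟩ : ℕ) = i - 1) (hp₁ : (π ⟨1, by omega⟩ : ℕ) = j - 1)
    {p : Fin n} (hp : n - j < p) : (π p : ℕ) < j - 1 := by
  by_contra! hpj
  have := val_eq_of_val_apply_eq_mk π (a := p) (k := 0)
  obtain ⟨k, hk1, hkj, hk⟩ := exists_runVal_eq hij hin hpj (π p).isLt (by omega)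
  have := apply_eq_runVal hj hij hin h1302 h1320 h2103 hp₀ hp₁ k (by omega) hk1 hkj
  have := val_eq_of_val_apply_eq_mk π (a := p) (k := k)
  omega

end Structure

lemma exists_perm_of_surjective {n : ℕ} (f : Fin n → ℕ) (hlt : ∀ p, f p < n)
    (hsurj : ∀ v < n, ∃ p, f p = v) : ∃ π : Equiv.Perm (Fin n), ∀ p, (π p : ℕ) = f p := by
  let g : Fin n → Fin n := fun p => ⟨f p, hlt p⟩
  have hg : Function.Surjective g := fun v => by
    obtain ⟨p, hp⟩ := hsurj v v.isLt
    exact ⟨p, Fin.ext hp⟩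
  exact ⟨Equiv.ofBijective g (Finite.surjective_iff_bijective.mp hg), fun p => rfl⟩

lemma exists_perm_tail {n m t : ℕ} (htm : t + m = n) (π : Equiv.Perm (Fin n))
    (h : ∀ p : Fin n, t ≤ p → (π p : ℕ) < m) :
    ∃ σ : Equiv.Perm (Fin m), ∀ (p : Fin n) (hp : t ≤ p), (π p : ℕ) = σ ⟨p - t, by omega⟩ := by
  let g : Fin m → Fin m := fun y => ⟨π ⟨t + y, by omega⟩, h _ (by simp)⟩
  have hg : Function.Injective g := fun y y' hyy' => by
    simp only [g, Fin.mk.injEq] at hyy'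
    simpa [Fin.ext_iff] using π.injective (Fin.ext hyy')
  refine ⟨Equiv.ofBijective g hg.bijective_of_finite, fun p hp => ?_⟩
  simp only [Equiv.ofBijective_apply, g]
  congr
  ext
  simp
  omega

section Construction

variable {n i j : ℕ}

/-- The word `i - 1`, then the run `j - 1, j, …, n - 1` without `i - 1`, then `σ`. -/
def prependRun (n i j : ℕ) (σ : Fin (j - 1) → Fin (j - 1)) (p : Fin n) : ℕ :=
  if hp : n - j < p then σ ⟨p - (n - j + 1), by omega⟩
  else if (p : ℕ) = 0 then i - 1 else runVal i j p

variable {σ : Fin (j - 1) → Fin (j - 1)}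

lemma prependRun_zero (hn : 0 < n) : prependRun n i j σ ⟨0, hn⟩ = i - 1 := by
  simp [prependRun]

lemma prependRun_of_le {p : Fin n} (hp1 : 1 ≤ (p : ℕ)) (hp : (p : ℕ) ≤ n - j) :
    prependRun n i j σ p = runVal i j p := by
  rw [prependRun, dif_neg (by omega), if_neg (by omega)]

lemma prependRun_one (hij : j < i) (hjn : j < n) (hn : 1 < n) :
    prependRun n i j σ ⟨1, hn⟩ = j - 1 := by
  rw [prependRun_of_le le_rfl (by simp; omega), runVal_one hij]

lemma prependRun_of_lt {p : Fin n} (hp : n - j < p) :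
    prependRun n i j σ p = σ ⟨p - (n - j + 1), by omega⟩ :=
  dif_pos hp

lemma prependRun_add {k : ℕ} (hk : k < j - 1) (hkn : n - j + 1 + k < n) :
    prependRun n i j σ ⟨n - j + 1 + k, hkn⟩ = σ ⟨k, hk⟩ := by
  rw [prependRun_of_lt (by simp; omega)]
  simp

lemma le_prependRun (hij : j < i) {p : Fin n} (hp : (p : ℕ) ≤ n - j) :
    j - 1 ≤ prependRun n i j σ p := by
  rw [prependRun, dif_neg (by omega)]
  split_ifs with hp0
  · omega
  · exact le_runVal (by omega)

lemma prependRun_lt (hij : j < i) (hin : i < n) (p : Fin n) : prependRun n i j σ p < n := by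
  unfold prependRun
  split_ifs
  · have := (σ ⟨p - (n - j + 1), by omega⟩).isLt
    omega
  · omega
  · have := runVal_le i j p
    omega

lemma prependRun_surjective (hj : 1 ≤ j) (hij : j < i) (hin : i < n)
    (σ : Equiv.Perm (Fin (j - 1))) {v : ℕ} (hv : v < n) : ∃ p, prependRun n i j σ p = v := by
  by_cases hvj : v < j - 1
  · let y := σ.symm ⟨v, hvj⟩
    refine ⟨⟨n - j + 1 + y, by omega⟩, ?_⟩
    rw [prependRun_of_lt (by simp; omega)]
    simp [y]
  by_cases hvi : v = i - 1
  · exact ⟨⟨0, by omega⟩, hvi ▸ prependRun_zero _⟩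
  obtain ⟨k, hk1, hkj, hk⟩ := exists_runVal_eq hij hin (by omega) hv hvi
  exact ⟨⟨k, by omega⟩, by rw [prependRun_of_le hk1 (by simp; omega), ← hk]⟩

lemma avoidsPat_of_prependRun (hj : 1 ≤ j) (hij : j < i) (hin : i < n) {π : Fin n → Fin n}
    (hπ : ∀ p, (π p : ℕ) = prependRun n i j σ p) {k : ℕ} {τ : Fin (k + 1) → Fin (k + 1)}
    (hτ : ∃ b b' c : Fin (k + 1), 0 < b ∧ b < b' ∧ b' ≤ c ∧ τ 0 < τ c ∧ τ b' < τ b)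
    (hσ : avoidsPat σ τ) : avoidsPat π τ := by
  refine fun h => hσ (containsPat_tail_of_skew (t := n - j + 1) (by omega)
    (fun p hp => (hπ p).trans (prependRun_of_lt (by omega))) (fun p q hp hq => ?_)
    (fun p q hp hpq hq => ?_) hτ h)
  · have := (σ ⟨q - (n - j + 1), by omega⟩).isLt
    have := le_prependRun hij (σ := σ) (p := p) (by omega)
    rw [Fin.lt_def, hπ, hπ, prependRun_of_lt (by omega)]
    omega
  · rw [Fin.lt_def, hπ, hπ, prependRun_of_le hp (by omega), prependRun_of_le (by omega) (by omega)]
    exact runVal_lt_runVal hj hp hpq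

end Construction

lemma apply_eq_prependRun {n i j : ℕ} {π : Equiv.Perm (Fin n)} (hj : 2 ≤ j) (hij : j < i)
    (hin : i < n) (h1302 : avoidsPat π ![1,3,0,2]) (h1320 : avoidsPat π ![1,3,2,0])
    (h2103 : avoidsPat π ![2,1,0,3])
    (hp₀ : (π ⟨0, by omega⟩ : ℕ) = i - 1) (hp₁ : (π ⟨1, by omega⟩ : ℕ) = j - 1)
    {σ : Fin (j - 1) → Fin (j - 1)}
    (hσ : ∀ (p : Fin n) (hp : n - j + 1 ≤ p), (π p : ℕ) = σ ⟨p - (n - j + 1), by omega⟩)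
    (p : Fin n) : (π p : ℕ) = prependRun n i j σ p := by
  unfold prependRun
  split_ifs with hp hp0
  · exact hσ p hp
  · rw [show p = ⟨0, by omega⟩ from Fin.ext hp0, hp₀]
  · exact apply_eq_runVal hj hij hin h1302 h1320 h2103 hp₀ hp₁ p p.isLt (by omega) (by omega)

def avoidsT {n : ℕ} (π : Fin n → Fin n) : Prop :=
  avoidsPat π ![1,3,0,2] ∧ avoidsPat π ![1,3,2,0] ∧ avoidsPat π ![2,1,0,3]

lemma card_avoidsT_prefix_eq {n i j : ℕ} (hj : 2 ≤ j) (hij : j < i) (hin : i < n) :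
    Nat.card {π : Equiv.Perm (Fin n) //
      avoidsT π ∧ (π ⟨0, by omega⟩ : ℕ) = i - 1 ∧ (π ⟨1, by omega⟩ : ℕ) = j - 1} =
    Nat.card {σ : Equiv.Perm (Fin (j - 1)) // avoidsT σ} := by
  choose F hF using fun σ : Equiv.Perm (Fin (j - 1)) => exists_perm_of_surjective _
    (prependRun_lt hij hin) (fun _ => prependRun_surjective (by omega) hij hin σ)
  symm
  refine Nat.card_eq_of_bijective (fun σ => ⟨F σ,
    ⟨avoidsPat_of_prependRun (by omega) hij hin (hF σ) (by decide) σ.2.1,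
      avoidsPat_of_prependRun (by omega) hij hin (hF σ) (by decide) σ.2.2.1,
      avoidsPat_of_prependRun (by omega) hij hin (hF σ) (by decide) σ.2.2.2⟩,
    (hF σ _).trans (prependRun_zero _), (hF σ _).trans (prependRun_one hij (by omega) _)⟩)
    ⟨fun σ σ' h => ?_, ?_⟩
  · refine Subtype.ext (Equiv.ext fun y => Fin.ext ?_)
    rw [← prependRun_add (n := n) (i := i) y.isLt (by omega), ← hF,
      ← prependRun_add (n := n) (i := i) y.isLt (by omega), ← hF]
    exact congrArg (fun π : Equiv.Perm (Fin n) => (π _ : ℕ)) (congrArg Subtype.val h)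
  · rintro ⟨π, ⟨h1302, h1320, h2103⟩, hp₀, hp₁⟩
    obtain ⟨σ, hσ⟩ := exists_perm_tail (t := n - j + 1) (by omega) π
      fun p hp => apply_lt_of_sub_lt hj hij hin h1302 h1320 h2103 hp₀ hp₁ (by omega)
    refine ⟨⟨σ, fun h => h1302 (containsPat_of_tail (by omega) hσ h),
      fun h => h1320 (containsPat_of_tail (by omega) hσ h),
      fun h => h2103 (containsPat_of_tail (by omega) hσ h)⟩,
      Subtype.ext (Equiv.ext fun p => Fin.ext ?_)⟩
    rw [hF, apply_eq_prependRun hj hij hin h1302 h1320 h2103 hp₀ hp₁ hσ]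

/-- Let T = {2413, 2431, 3214} (0-indexed: 1302, 1320, 2103). If π ∈ S_n avoids T and
begins i, j with 2 ≤ j < i ≤ n−1, then after the first two letters π continues with the
increasing run (j+1)(j+2)⋯n with i omitted, followed by a T-avoiding permutation of
[j−1]; consequently the number of such π equals |S_{j−1}(T)|. -/
theorem stmt10 (n i j : ℕ) (hj : 2 ≤ j) (hij : j < i) (hi : i ≤ n - 1) :
    (∀ π : Equiv.Perm (Fin n),
      avoidsPat (⇑π) ![1,3,0,2] → avoidsPat (⇑π) ![1,3,2,0] → avoidsPat (⇑π) ![2,1,0,3] →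
      (π ⟨0, by omega⟩ : ℕ) = i - 1 → (π ⟨1, by omega⟩ : ℕ) = j - 1 →
      ∀ k : ℕ, ∀ hk : k < n, 2 ≤ k → k + j ≤ n →
        (π ⟨k, hk⟩ : ℕ) = if j + k - 1 < i then j + k - 2 else j + k - 1) ∧
    Nat.card {π : Equiv.Perm (Fin n) //
      (avoidsPat (⇑π) ![1,3,0,2] ∧ avoidsPat (⇑π) ![1,3,2,0] ∧
        avoidsPat (⇑π) ![2,1,0,3]) ∧
      (π ⟨0, by omega⟩ : ℕ) = i - 1 ∧ (π ⟨1, by omega⟩ : ℕ) = j - 1} =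
    Nat.card {σ : Equiv.Perm (Fin (j - 1)) //
      avoidsPat (⇑σ) ![1,3,0,2] ∧ avoidsPat (⇑σ) ![1,3,2,0] ∧
        avoidsPat (⇑σ) ![2,1,0,3]} := by
  have hin : i < n := by omega
  exact ⟨fun π h1302 h1320 h2103 hp₀ hp₁ k hk hk2 hkj =>
    apply_eq_runVal hj hij hin h1302 h1320 h2103 hp₀ hp₁ k hk (by omega) hkj,
    card_avoidsT_prefix_eq hj hij hin⟩
end
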